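/- arXiv:math/0407143 — 5 statements merged into one kernel-verified Lean document; each statement's English description precedes it below -/
import Mathlib

section
/- Let K be a field, v ≥ 1 and h ≥ 0 integers, and let n₁ > n₂ > … > n_r ≥ 1 be integers with n_a − n_{a+1} ≥ v for all 1 ≤ a < r. Set α_a = max(0, n_a − v·h) for 1 ≤ a ≤ r. Then for all integers i, k, j with 1 ≤ i ≤ k ≤ r and j ≤ n_k, in the polynomial ring K[x,t] one has t^{α_{k−i+1}}·(x − t^v)^h ∈ (x^i, t^j) (the ideal generated by x^i and t^j). If moreover k < r and j ≤ n_{k+1}, then t^{α_{k−i+1}}·(x − t^v)^h ∈ (x^{i+1}, t^j). -/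
/-!
Expanding `(x - t^v)^h`, the coefficient of `x^l` is a multiple of `t^(α + v(h - l))`, so the
terms with `l ≥ i` lie in `(x^i)` and the others lie in `(t^j)` as soon as `j ≤ α + v(h - l)`.
For `α = n_{k-i+1} - vh` this follows from `n_{k-i+1} ≥ n_k + v(i - 1)` (resp.
`n_{k-i+1} ≥ n_{k+1} + vi`), since consecutive `n_a` drop by at least `v`.
-/

open MvPolynomial

theorem pow_mul_sub_pow_pow_mem_span_pow {R : Type*} [CommRing R] (x t : R) {α v h i j : ℕ}
    (hexp : ∀ l ≤ h, l < i → j ≤ α + v * (h - l)) :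
    t ^ α * (x - t ^ v) ^ h ∈ Ideal.span {x ^ i, t ^ j} := by
  rw [sub_pow, Finset.mul_sum]
  refine Ideal.sum_mem _ fun l hl => ?_
  have hlh : l ≤ h := Nat.lt_succ_iff.mp (Finset.mem_range.mp hl)
  by_cases hli : l < i
  · refine Ideal.mem_of_dvd _ ?_ (Ideal.subset_span (Set.mem_insert_of_mem _ rfl))
    calc t ^ j ∣ t ^ (α + v * (h - l)) := pow_dvd_pow t (hexp l hlh hli)
      _ ∣ _ := Dvd.intro ((-1) ^ (l + h) * x ^ l * h.choose l) (by ring)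
  · refine Ideal.mem_of_dvd _ ?_ (Ideal.subset_span (Set.mem_insert _ _))
    calc x ^ i ∣ x ^ l := pow_dvd_pow x (not_lt.mp hli)
      _ ∣ _ := Dvd.intro (t ^ α * (-1) ^ (l + h) * (t ^ v) ^ (h - l) * h.choose l) (by ring)

theorem add_mul_sub_le_of_succ_add_le {v r : ℕ} {n : ℕ → ℕ}
    (hdec : ∀ a, 1 ≤ a → a < r → n (a + 1) + v ≤ n a) {a b : ℕ} (ha : 1 ≤ a) (hab : a ≤ b)
    (hbr : b ≤ r) : n b + v * (b - a) ≤ n a := by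
  induction b, hab using Nat.le_induction with
  | base => simp
  | succ b hab ih =>
    have hstep := hdec b (ha.trans hab) hbr
    rw [Nat.succ_sub hab, Nat.mul_succ]
    have hprev := ih (by omega)
    omega

theorem le_sub_add_mul_sub {m v h l j : ℕ} (hlh : l ≤ h) (hj : j + v * l ≤ m) :
    j ≤ m - v * h + v * (h - l) := by
  have : v * l ≤ v * h := Nat.mul_le_mul_left v hlh
  rw [Nat.mul_sub]
  omega

theorem generator_t_exponents_general {K : Type*} [Field K] (v h r : ℕ)
    (n : ℕ → ℕ)
    (hdec : ∀ a, 1 ≤ a → a < r → n (a + 1) + v ≤ n a)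
    (i k j : ℕ) (hik : i ≤ k) (hkr : k ≤ r) :
    (j ≤ n k →
      (X 1 : MvPolynomial (Fin 2) K) ^ (n (k - i + 1) - v * h) * (X 0 - X 1 ^ v) ^ h ∈
        Ideal.span {(X 0 : MvPolynomial (Fin 2) K) ^ i, X 1 ^ j}) ∧
    (k < r → j ≤ n (k + 1) →
      (X 1 : MvPolynomial (Fin 2) K) ^ (n (k - i + 1) - v * h) * (X 0 - X 1 ^ v) ^ h ∈
        Ideal.span {(X 0 : MvPolynomial (Fin 2) K) ^ (i + 1), X 1 ^ j}) := by
  constructor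
  · refine fun hj => pow_mul_sub_pow_pow_mem_span_pow _ _ fun l hlh hli =>
      le_sub_add_mul_sub hlh ?_
    have hgap := add_mul_sub_le_of_succ_add_le hdec (a := k - i + 1) (b := k) le_add_self
      (by omega) hkr
    have : v * l ≤ v * (k - (k - i + 1)) := Nat.mul_le_mul_left v (by omega)
    omega
  · refine fun hk hj => pow_mul_sub_pow_pow_mem_span_pow _ _ fun l hlh hli =>
      le_sub_add_mul_sub hlh ?_
    have hgap := add_mul_sub_le_of_succ_add_le hdec (a := k - i + 1) (b := k + 1) le_add_self
      (by omega) hk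
    have : v * l ≤ v * (k + 1 - (k - i + 1)) := Nat.mul_le_mul_left v (by omega)
    omega

/-- **One-variable core of the lemma on the `t`-exponents of the generators**
(Evain, "Computing limit linear series with infinitesimal methods").

`K` a field, `v ≥ 1`, `h ≥ 0`, and `n₁ > n₂ > … > n_r ≥ 1` integers with
`n_a − n_{a+1} ≥ v` for `1 ≤ a < r`.  Set `α_a = max(0, n_a − v·h)` (here
realized by truncated subtraction `n a - v * h`).  In the polynomial ring
`K[x,t]` (with `x = X 0`, `t = X 1`), for `1 ≤ i ≤ k ≤ r` and `j ≤ n_k` one has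
`t^{α_{k−i+1}}·(x − t^v)^h ∈ (x^i, t^j)`; and if moreover `k < r` and
`j ≤ n_{k+1}`, then `t^{α_{k−i+1}}·(x − t^v)^h ∈ (x^{i+1}, t^j)`. -/
theorem generator_t_exponents {K : Type*} [Field K] (v h r : ℕ) (hv : 1 ≤ v)
    (n : ℕ → ℕ) (hnr : 1 ≤ n r)
    (hdec : ∀ a, 1 ≤ a → a < r → n (a + 1) + v ≤ n a)
    (i k j : ℕ) (hi : 1 ≤ i) (hik : i ≤ k) (hkr : k ≤ r) :
    (j ≤ n k →
      (X 1 : MvPolynomial (Fin 2) K) ^ (n (k - i + 1) - v * h) * (X 0 - X 1 ^ v) ^ h ∈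
        Ideal.span {(X 0 : MvPolynomial (Fin 2) K) ^ i, X 1 ^ j}) ∧
    (k < r → j ≤ n (k + 1) →
      (X 1 : MvPolynomial (Fin 2) K) ^ (n (k - i + 1) - v * h) * (X 0 - X 1 ^ v) ^ h ∈
        Ideal.span {(X 0 : MvPolynomial (Fin 2) K) ^ (i + 1), X 1 ^ j}) :=
  generator_t_exponents_general v h r n hdec i k j hik hkr
end

section
/- Let K be a field and n ≥ 1, v ≥ 1, h ≥ 0 integers. In the ring A = K[x][t]/(t^n), let f denote the class of (x − t^v)^h and set α = max(0, n − v·h). Then: (a) x is a non-zero-divisor of A; (b) there exists a unique g ∈ A with x·g = t^α·f; and (c) the ideal quotient ((f) : x) = {z ∈ A : x·z ∈ (f)} is equal to the ideal generated by f and g. -/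
open Polynomial

namespace TransporterAux

/-- Any class of a polynomial not divisible by `X` is a non-zero-divisor in
`K[x][t]/(t^n)`. -/
lemma nzd {K : Type*} [Field K] (n : ℕ) {q : Polynomial (Polynomial K)}
    (hq : ¬ (X : Polynomial (Polynomial K)) ∣ q)
    (z : Polynomial (Polynomial K) ⧸ Ideal.span {(X : Polynomial (Polynomial K)) ^ n})
    (hz : Ideal.Quotient.mk (Ideal.span {(X : Polynomial (Polynomial K)) ^ n}) q * z = 0) :
    z = 0 := by
  obtain ⟨p, rfl⟩ := Ideal.Quotient.mk_surjective z
  rw [← map_mul] at hz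
  rw [Ideal.Quotient.eq_zero_iff_mem, Ideal.mem_span_singleton] at hz ⊢
  exact (Polynomial.prime_X (R := Polynomial K)).pow_dvd_of_dvd_mul_left n hq hz

/-- Key step: if `c·(x - t^v)^h ∈ (x) + (t^n)` (in `K[x][t]`), then
`c ∈ (x, t^(n - vh))`. -/
lemma stepA {K : Type*} [Field K] (n v h : ℕ) {c p e : Polynomial (Polynomial K)}
    (hc : c * (C X - X ^ v) ^ h = C X * p + e * X ^ n) :
    c ∈ Ideal.span {(C X : Polynomial (Polynomial K)), X ^ (n - v * h)} := by
  set σ : Polynomial (Polynomial K) →+* Polynomial (Polynomial K) :=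
    Polynomial.mapRingHom ((C : K →+* Polynomial K).comp (Polynomial.evalRingHom 0)) with hσ
  have hσC : σ (C X) = 0 := by
    simp [hσ, Polynomial.map_C]
  have hσX : σ (X : Polynomial (Polynomial K)) = X := by
    simp [hσ]
  -- `c - σ c` is divisible by `C X`
  have h1 : (C X : Polynomial (Polynomial K)) ∣ c - σ c := by
    rw [Polynomial.C_dvd_iff_dvd_coeff]
    intro i
    rw [Polynomial.X_dvd_iff]
    simp [hσ, Polynomial.coeff_map, Polynomial.coeff_sub, Polynomial.coeff_zero_eq_eval_zero]
  -- `X^(n - v*h)` divides `σ c`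
  have h2 := congrArg σ hc
  simp only [map_mul, map_add, map_pow, map_sub, hσC, hσX] at h2
  have e1 : ((0 : Polynomial (Polynomial K)) - X ^ v) ^ h = (-1) ^ h * X ^ (v * h) := by
    rw [zero_sub, neg_pow (X ^ v : Polynomial (Polynomial K)) h, pow_mul]
  rw [e1, zero_mul, zero_add] at h2
  have hsq : ((-1 : Polynomial (Polynomial K)) ^ h) * ((-1) ^ h) = 1 := by
    rw [← pow_add, ← two_mul, pow_mul]; norm_num
  have h3 : σ c * X ^ (v * h) = ((-1) ^ h * σ e) * X ^ n := by
    linear_combination ((-1 : Polynomial (Polynomial K)) ^ h) * h2 -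
      (σ c * X ^ (v * h)) * hsq
  have hα : (X : Polynomial (Polynomial K)) ^ (n - v * h) ∣ σ c := by
    rcases le_or_gt n (v * h) with hle | hlt
    · simp [Nat.sub_eq_zero_of_le hle]
    · have hn' : v * h + (n - v * h) = n := Nat.add_sub_cancel' hlt.le
      have hXpow : (X : Polynomial (Polynomial K)) ^ (v * h) * X ^ (n - v * h) = X ^ n := by
        rw [← pow_add, hn']
      refine ⟨(-1) ^ h * σ e, mul_left_cancel₀
        (pow_ne_zero (v * h) (Polynomial.X_ne_zero (R := Polynomial K))) ?_⟩
      linear_combination h3 - ((-1 : Polynomial (Polynomial K)) ^ h * σ e) * hXpow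
  obtain ⟨q1, hq1⟩ := h1
  obtain ⟨q2, hq2⟩ := hα
  rw [Ideal.mem_span_pair]
  exact ⟨q1, q2, by linear_combination -hq1 - hq2⟩

end TransporterAux

/-- **The transporter `(J_{n₁} : x₁)` in one variable, base case** (Evain,
computation of the residual ideals).

In `A = K[x][t]/(t^n)` (realized as `K[x][t] / (t^n)` with `t` the outer
variable `X` and `x = C X`), let `f` be the class of `(x − t^v)^h` and
`α = max(0, n − vh)` (truncated subtraction).  Then:
(a) `x` is a non-zero-divisor of `A`;
(b) there is a unique `g ∈ A` with `x·g = t^α·f`;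
(c) the ideal quotient `((f) : x)` equals the ideal `(f, g)`. -/
theorem transporter_base_case {K : Type*} [Field K] (n v h : ℕ) (hn : 1 ≤ n) (hv : 1 ≤ v) :
    (∀ z : Polynomial (Polynomial K) ⧸ Ideal.span {(X : Polynomial (Polynomial K)) ^ n},
      Ideal.Quotient.mk (Ideal.span {(X : Polynomial (Polynomial K)) ^ n}) (C X) * z = 0 →
        z = 0) ∧
    (∃! g : Polynomial (Polynomial K) ⧸ Ideal.span {(X : Polynomial (Polynomial K)) ^ n},
      Ideal.Quotient.mk (Ideal.span {(X : Polynomial (Polynomial K)) ^ n}) (C X) * g =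
        Ideal.Quotient.mk (Ideal.span {(X : Polynomial (Polynomial K)) ^ n})
          (X ^ (n - v * h) * (C X - X ^ v) ^ h)) ∧
    (∀ g : Polynomial (Polynomial K) ⧸ Ideal.span {(X : Polynomial (Polynomial K)) ^ n},
      Ideal.Quotient.mk (Ideal.span {(X : Polynomial (Polynomial K)) ^ n}) (C X) * g =
        Ideal.Quotient.mk (Ideal.span {(X : Polynomial (Polynomial K)) ^ n})
          (X ^ (n - v * h) * (C X - X ^ v) ^ h) →
      (Ideal.span {Ideal.Quotient.mk (Ideal.span {(X : Polynomial (Polynomial K)) ^ n})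
          ((C X - X ^ v) ^ h)}).colon
        (Ideal.span {Ideal.Quotient.mk (Ideal.span {(X : Polynomial (Polynomial K)) ^ n})
          (C X)}) =
      Ideal.span {Ideal.Quotient.mk (Ideal.span {(X : Polynomial (Polynomial K)) ^ n})
          ((C X - X ^ v) ^ h), g}) := by
  set I : Ideal (Polynomial (Polynomial K)) := Ideal.span {(X : Polynomial (Polynomial K)) ^ n}
    with hIdef
  set mk := Ideal.Quotient.mk I with hmk
  -- part (a): x is a non-zero-divisor
  have hCXdvd : ¬ (X : Polynomial (Polynomial K)) ∣ C X := by
    rw [Polynomial.X_dvd_iff, Polynomial.coeff_C_zero]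
    exact Polynomial.X_ne_zero
  have ha : ∀ z : Polynomial (Polynomial K) ⧸ I, mk (C X) * z = 0 → z = 0 :=
    fun z hz => TransporterAux.nzd n hCXdvd z hz
  -- the auxiliary witness for part (b)
  obtain ⟨Q, hQ⟩ : (C X : Polynomial (Polynomial K)) ∣
      (C X - X ^ v) ^ h - (-(X ^ v)) ^ h := by
    have hd := sub_dvd_pow_sub_pow (C X - X ^ v : Polynomial (Polynomial K)) (-(X ^ v)) h
    have heq : (C X - X ^ v : Polynomial (Polynomial K)) - (-(X ^ v)) = C X := by ring
    rwa [heq] at hd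
  have hle : n ≤ (n - v * h) + v * h := le_tsub_add
  have e2 : (X : Polynomial (Polynomial K)) ^ (n - v * h) * (-(X ^ v)) ^ h =
      (-1) ^ h * X ^ ((n - v * h) + v * h) := by
    rw [neg_pow (X ^ v : Polynomial (Polynomial K)) h, pow_add, pow_mul]; ring
  have hkey : mk (C X) * mk (X ^ (n - v * h) * Q) =
      mk (X ^ (n - v * h) * (C X - X ^ v) ^ h) := by
    rw [← map_mul, Ideal.Quotient.eq, hIdef, Ideal.mem_span_singleton]
    have h5 : C X * (X ^ (n - v * h) * Q) - X ^ (n - v * h) * (C X - X ^ v) ^ h =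
        -((-1) ^ h * X ^ ((n - v * h) + v * h)) := by
      linear_combination (-(X : Polynomial (Polynomial K)) ^ (n - v * h)) * hQ + e2
    rw [h5]
    exact ((pow_dvd_pow X hle).mul_left _).neg_right
  refine ⟨ha, ⟨mk (X ^ (n - v * h) * Q), hkey, ?_⟩, ?_⟩
  · -- uniqueness in (b)
    intro y hy
    have hz : mk (C X) * (y - mk (X ^ (n - v * h) * Q)) = 0 := by
      linear_combination hy - hkey
    have := ha _ hz
    rwa [sub_eq_zero] at this
  · -- part (c)
    intro g hg
    have hg' : mk (C X) * g = mk (X ^ (n - v * h)) * mk ((C X - X ^ v) ^ h) := by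
      rw [hg]; exact map_mul _ _ _
    refine le_antisymm (fun z hz => ?_) (Ideal.span_le.mpr ?_)
    · rw [Ideal.mem_colon_span_singleton (R := Polynomial (Polynomial K) ⧸ I)] at hz
      obtain ⟨c, hc⟩ := Ideal.mem_span_singleton'.mp hz
      obtain ⟨c', rfl⟩ := Ideal.Quotient.mk_surjective c
      obtain ⟨z', rfl⟩ := Ideal.Quotient.mk_surjective z
      have hmem : c' * (C X - X ^ v) ^ h - z' * C X ∈ I := by
        rw [← Ideal.Quotient.eq, map_mul, map_mul]
        exact hc
      rw [hIdef, Ideal.mem_span_singleton] at hmem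
      obtain ⟨e, he⟩ := hmem
      have hcc : c' * (C X - X ^ v) ^ h = C X * z' + e * X ^ n := by
        linear_combination he
      obtain ⟨a, b, hab⟩ := Ideal.mem_span_pair.mp (TransporterAux.stepA n v h hcc)
      have hab' : mk a * mk (C X) + mk b * mk (X ^ (n - v * h)) = mk c' := by
        have := congrArg mk hab
        simpa only [map_add, map_mul] using this
      have hc' : mk c' * mk ((C X - X ^ v) ^ h) = mk (C X) * mk z' := by
        rw [← map_mul, ← map_mul, Ideal.Quotient.eq, hIdef, Ideal.mem_span_singleton]
        exact ⟨e, by linear_combination he⟩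
      have hzero : mk (C X) *
          (mk z' - (mk a * mk ((C X - X ^ v) ^ h) + mk b * g)) = 0 := by
        linear_combination -hc' - mk ((C X - X ^ v) ^ h) * hab' - mk b * hg'
      have hfin := ha _ hzero
      rw [sub_eq_zero] at hfin
      rw [Ideal.mem_span_pair]
      exact ⟨mk a, mk b, hfin.symm⟩
    · intro w hw
      simp only [Set.mem_insert_iff, Set.mem_singleton_iff] at hw
      rcases hw with rfl | rfl
      · simp only [SetLike.mem_coe, Ideal.mem_colon_span_singleton (R := Polynomial (Polynomial K) ⧸ I)]
        rw [mul_comm (mk ((C X - X ^ v) ^ h)) (mk (C X))]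
        exact Ideal.mul_mem_left _ _ (Ideal.subset_span (Set.mem_singleton _))
      · simp only [SetLike.mem_coe, Ideal.mem_colon_span_singleton (R := Polynomial (Polynomial K) ⧸ I)]
        rw [mul_comm w (mk (C X)), hg']
        exact Ideal.mul_mem_left _ _ (Ideal.subset_span (Set.mem_singleton _))
end

section
/- Let K be a field, v ≥ 1 and h ≥ 0 integers, and n₁ > n₂ > … > n_r ≥ 1 integers with n_a − n_{a+1} ≥ v for 1 ≤ a < r. Set α_a = max(0, n_a − v·h). For each a let A_a = K[x][t]/(t^{n_a}), let π_a : A_a → A_{a+1} be the natural projection, and let f_a ∈ A_a denote the class of (x − t^v)^h. Define ideals recursively: J₁ = (f₁) ⊆ A₁; J_a' = (J_a : x) ⊆ A_a; J_{a+1} = π_a(J_a')·A_{a+1} (the image ideal). Then for each 1 ≤ k ≤ r, the ideal J_k' ⊆ A_k is generated by f_k together with the elements g₁,…,g_k, where g_i ∈ A_k is the unique element satisfying x^i·g_i = t^{α_{k−i+1}}·f_k. -/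
open Polynomial

namespace ResidualAux

variable {K : Type*} [Field K]

/-- Binomial decomposition: `(x - t^v)^h = x^i Q + t^(v(h+1-i)) R`. -/
lemma decomp (v h i : ℕ) : ∃ Q Rr : Polynomial (Polynomial K),
    (C X - X ^ v) ^ h = C X ^ i * Q + X ^ (v * (h + 1 - i)) * Rr := by
  classical
  have hsum : ((C X - X ^ v : Polynomial (Polynomial K))) ^ h
      = ∑ j ∈ Finset.range (h+1), (C X : Polynomial (Polynomial K)) ^ j * (-(X ^ v)) ^ (h - j) * ((h.choose j : ℕ) : Polynomial (Polynomial K)) := by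
    rw [sub_eq_add_neg, add_pow]
  rw [← Finset.sum_filter_add_sum_filter_not (Finset.range (h+1)) (fun j => i ≤ j)] at hsum
  have hA : ∑ j ∈ (Finset.range (h+1)).filter (fun j => i ≤ j),
      (C X : Polynomial (Polynomial K)) ^ j * (-(X ^ v)) ^ (h - j) * ((h.choose j : ℕ) : Polynomial (Polynomial K))
      = C X ^ i * ∑ j ∈ (Finset.range (h+1)).filter (fun j => i ≤ j),
          (C X : Polynomial (Polynomial K)) ^ (j - i) * (-(X ^ v)) ^ (h - j) * ((h.choose j : ℕ) : Polynomial (Polynomial K)) := by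
    rw [Finset.mul_sum]
    refine Finset.sum_congr rfl ?_
    intro j hj
    simp only [Finset.mem_filter, Finset.mem_range] at hj
    rw [← mul_assoc, ← mul_assoc, ← pow_add, Nat.add_sub_cancel' hj.2]
  have hB : (X : Polynomial (Polynomial K)) ^ (v * (h + 1 - i)) ∣
      ∑ j ∈ (Finset.range (h+1)).filter (fun j => ¬ i ≤ j),
        (C X : Polynomial (Polynomial K)) ^ j * (-(X ^ v)) ^ (h - j) * ((h.choose j : ℕ) : Polynomial (Polynomial K)) := by
    refine Finset.dvd_sum ?_
    intro j hj
    simp only [Finset.mem_filter, Finset.mem_range, not_le] at hj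
    have h1 : (X : Polynomial (Polynomial K)) ^ (v * (h + 1 - i)) ∣ (-(X ^ v)) ^ (h - j) := by
      rw [neg_pow (R := Polynomial (Polynomial K)) (X ^ v) (h - j), ← pow_mul]
      exact Dvd.dvd.mul_left (pow_dvd_pow _ (Nat.mul_le_mul_left v (by omega))) _
    exact ((h1.mul_left _).mul_right _)
  obtain ⟨Rr, hR⟩ := hB
  exact ⟨_, Rr, by rw [hsum, hA, hR]⟩

/-- `x = C X` is regular modulo `t^N`. -/
lemma xreg (N : ℕ) (a : Polynomial (Polynomial K))
    (hd : (X : Polynomial (Polynomial K)) ^ N ∣ C X * a) :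
    (X : Polynomial (Polynomial K)) ^ N ∣ a := by
  refine (Polynomial.prime_X).pow_dvd_of_dvd_mul_left N ?_ hd
  rw [Polynomial.X_dvd_iff, Polynomial.coeff_C_zero]
  exact Polynomial.X_ne_zero

/-- Cancellation of `x` in the quotient. -/
lemma mk_cancel1 (N : ℕ) {z w : Polynomial (Polynomial K) ⧸
      Ideal.span {(X : Polynomial (Polynomial K)) ^ N}}
    (hzw : (Ideal.Quotient.mk (Ideal.span {(X : Polynomial (Polynomial K)) ^ N}) (C X)) * z
      = (Ideal.Quotient.mk (Ideal.span {(X : Polynomial (Polynomial K)) ^ N}) (C X)) * w) :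
    z = w := by
  obtain ⟨Z, rfl⟩ := Ideal.Quotient.mk_surjective z
  obtain ⟨W, rfl⟩ := Ideal.Quotient.mk_surjective w
  have h0 : Ideal.Quotient.mk (Ideal.span {(X : Polynomial (Polynomial K)) ^ N})
      (C X * (Z - W)) = 0 := by
    rw [mul_sub, map_sub, sub_eq_zero, map_mul, map_mul]
    exact hzw
  rw [Ideal.Quotient.eq_zero_iff_mem, Ideal.mem_span_singleton] at h0
  have := xreg N _ h0
  rw [← sub_eq_zero, ← map_sub, Ideal.Quotient.eq_zero_iff_mem, Ideal.mem_span_singleton]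
  exact this

/-- Cancellation of `x^i` in the quotient. -/
lemma mk_cancel (N i : ℕ) {z w : Polynomial (Polynomial K) ⧸
      Ideal.span {(X : Polynomial (Polynomial K)) ^ N}}
    (hzw : (Ideal.Quotient.mk (Ideal.span {(X : Polynomial (Polynomial K)) ^ N}) (C X)) ^ i * z
      = (Ideal.Quotient.mk (Ideal.span {(X : Polynomial (Polynomial K)) ^ N}) (C X)) ^ i * w) :
    z = w := by
  induction i with
  | zero => simpa using hzw
  | succ i ih =>
    rw [pow_succ', mul_assoc, mul_assoc] at hzw
    exact ih (mk_cancel1 N hzw)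

/-- Key arithmetic estimate. -/
lemma arith (v h N m i : ℕ) (hi : 1 ≤ i) (hm : N + (i - 1) * v ≤ m) :
    N ≤ (m - v * h) + v * (h + 1 - i) := by
  have h2 : i * v = (i - 1) * v + v := by
    have : i = (i - 1) + 1 := by omega
    nth_rewrite 1 [this]; ring
  rcases le_or_gt i (h + 1) with hih | hih
  · have h3 : v * (h + 1 - i) + v * i = v * (h + 1) := by
      rw [← Nat.mul_add]
      congr 1
      omega
    have h4 : v * (h + 1) = v * h + v := by ring
    have h5 : v * i = i * v := Nat.mul_comm _ _
    omega
  · have h3 : v * (h + 1 - i) = 0 := by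
      have : h + 1 - i = 0 := by omega
      rw [this, Nat.mul_zero]
    have h4 : (h + 1) * v ≤ (i - 1) * v := Nat.mul_le_mul_right v (by omega)
    have h5 : (h + 1) * v = h * v + v := by ring
    have h6 : v * h = h * v := Nat.mul_comm _ _
    omega

/-- Key equation modulo `t^N`. -/
lemma keyeq (v h N i a : ℕ) (Q R : Polynomial (Polynomial K))
    (hQR : (C X - X ^ v) ^ h = C X ^ i * Q + X ^ (v * (h + 1 - i)) * R)
    (hN : N ≤ a + v * (h + 1 - i)) :
    (Ideal.Quotient.mk (Ideal.span {(X : Polynomial (Polynomial K)) ^ N}) (C X)) ^ i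
        * Ideal.Quotient.mk (Ideal.span {(X : Polynomial (Polynomial K)) ^ N}) (X ^ a * Q)
      = Ideal.Quotient.mk (Ideal.span {(X : Polynomial (Polynomial K)) ^ N})
          (X ^ a * (C X - X ^ v) ^ h) := by
  rw [← map_pow, ← map_mul, Ideal.Quotient.eq, Ideal.mem_span_singleton]
  have hid : C X ^ i * (X ^ a * Q) - X ^ a * (C X - X ^ v) ^ h
      = -(X ^ a * (X ^ (v * (h + 1 - i)) * R)) := by
    rw [hQR]; ring
  rw [hid]
  refine (dvd_neg (α := Polynomial (Polynomial K))).mpr ?_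
  rw [← mul_assoc, ← pow_add]
  exact Dvd.dvd.mul_right (pow_dvd_pow _ hN) _

/-- Elements of the span of `x • B` are `x` times elements of the span of `B`. -/
lemma span_smul_mem {A : Type*} [CommRing A] (x : A) (B : Set A) {z : A}
    (hz : z ∈ Ideal.span ((fun b => x * b) '' B)) :
    ∃ b' ∈ Ideal.span B, x * b' = z := by
  have himg : (fun b => x * b) '' B = (LinearMap.lsmul A A x) '' B := by
    refine Set.image_congr ?_
    intro b _
    simp [smul_eq_mul]
  rw [himg] at hz
  have : Ideal.span ((LinearMap.lsmul A A x) '' B)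
      = Submodule.map (LinearMap.lsmul A A x) (Ideal.span B) :=
    (Submodule.map_span (LinearMap.lsmul A A x) B).symm
  rw [this] at hz
  obtain ⟨b', hb', hxb⟩ := Submodule.mem_map.mp hz
  exact ⟨b', hb', hxb⟩

/-- Colon of a sum with a multiple ideal. -/
lemma colon_sup {A : Type*} [CommRing A] (a x : A) (B : Set A) :
    (Ideal.span ({a} ∪ (fun b => x * b) '' B)).colon (Ideal.span {x})
      = (Ideal.span {a}).colon (Ideal.span {x}) ⊔ Ideal.span B := by
  apply le_antisymm
  · intro q hq
    rw [Ideal.mem_colon_span_singleton, Ideal.span_union] at hq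
    obtain ⟨y, hy, z, hz, hyz⟩ := Submodule.mem_sup.mp hq
    obtain ⟨b', hb', rfl⟩ := span_smul_mem x B hz
    have hqb : q - b' ∈ (Ideal.span {a}).colon (Ideal.span {x}) := by
      rw [Ideal.mem_colon_span_singleton]
      have : (q - b') * x = y := by
        rw [sub_mul]
        have hxq : q * x = y + x * b' := hyz.symm
        rw [hxq]; ring
      rw [this]; exact hy
    have : q = (q - b') + b' := by ring
    rw [this]
    exact Submodule.add_mem_sup hqb hb'
  · rw [sup_le_iff]
    constructor
    · intro q hq
      rw [Ideal.mem_colon_span_singleton] at hq ⊢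
      refine Ideal.span_mono Set.subset_union_left hq
    · intro b hb
      rw [Ideal.mem_colon_span_singleton]
      rcases Ideal.mem_span_singleton'.mp (Ideal.mem_span_singleton_self b) with _
      -- b * x ∈ span (x • B): since b ∈ span B
      have : b * x ∈ Ideal.span ((fun b => x * b) '' B) := by
        have himg : (fun b => x * b) '' B = (LinearMap.lsmul A A x) '' B := by
          refine Set.image_congr ?_
          intro b _
          simp [smul_eq_mul]
        rw [himg]
        have hmS : Ideal.span ((LinearMap.lsmul A A x) '' B)
            = Submodule.map (LinearMap.lsmul A A x) (Ideal.span B) :=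
          (Submodule.map_span (LinearMap.lsmul A A x) B).symm
        rw [hmS]
        exact ⟨b, hb, by simp [smul_eq_mul, mul_comm]⟩
      exact Ideal.span_mono Set.subset_union_right this

/-- Core lemma: the colon of the principal ideal `(f)` by `x` modulo `t^N`. -/
lemma colonF (v h N : ℕ) (Q1 R1 : Polynomial (Polynomial K))
    (hQ1 : ((C X - X ^ v : Polynomial (Polynomial K))) ^ h = C X * Q1 + X ^ (v * h) * R1) :
    (Ideal.span {Ideal.Quotient.mk (Ideal.span {(X : Polynomial (Polynomial K)) ^ N})
        ((C X - X ^ v) ^ h)}).colon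
        (Ideal.span {Ideal.Quotient.mk (Ideal.span {(X : Polynomial (Polynomial K)) ^ N}) (C X)})
      = Ideal.span {Ideal.Quotient.mk (Ideal.span {(X : Polynomial (Polynomial K)) ^ N})
          ((C X - X ^ v) ^ h),
          Ideal.Quotient.mk (Ideal.span {(X : Polynomial (Polynomial K)) ^ N})
            (X ^ (N - v * h) * Q1)} := by
  set mkN := Ideal.Quotient.mk (Ideal.span {(X : Polynomial (Polynomial K)) ^ N}) with hmkN
  apply le_antisymm
  · intro q hq
    rw [Ideal.mem_colon_span_singleton (R := Polynomial (Polynomial K) ⧸ Ideal.span {(X : Polynomial (Polynomial K)) ^ N}), Ideal.mem_span_singleton'] at hq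
    obtain ⟨c, hc⟩ := hq
    obtain ⟨Cp, rfl⟩ := Ideal.Quotient.mk_surjective c
    obtain ⟨Qp, rfl⟩ := Ideal.Quotient.mk_surjective q
    have h0 : mkN (Cp * (C X - X ^ v) ^ h - Qp * C X) = 0 := by
      rw [map_sub, map_mul, map_mul, sub_eq_zero]
      exact hc
    rw [Ideal.Quotient.eq_zero_iff_mem, Ideal.mem_span_singleton] at h0
    obtain ⟨S, hS⟩ := h0
    set φ : Polynomial (Polynomial K) →+* Polynomial K :=
      mapRingHom (evalRingHom (0 : K)) with hφdef
    have hφCX : φ (C X) = 0 := by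
      simp [hφdef]
    have hφX : φ (X : Polynomial (Polynomial K)) = X := by
      simp [hφdef]
    have hφ := congrArg φ hS
    rw [map_sub, map_mul, map_mul, map_mul, hφCX, map_pow, map_sub, hφCX, map_pow, hφX,
      map_pow, hφX, mul_zero, sub_zero, zero_sub,
      neg_pow (R := Polynomial K) (X ^ v) h, ← pow_mul] at hφ
    -- hφ : φ Cp * ((-1)^h * X^(v*h)) = X^N * φ S
    have hdvd2 : (X : Polynomial K) ^ N ∣ φ Cp * X ^ (v * h) := by
      have hu : IsUnit ((-1 : Polynomial K) ^ h) := (isUnit_one.neg).pow h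
      have h1 : (X : Polynomial K) ^ N ∣ (φ Cp * X ^ (v * h)) * (-1) ^ h := by
        refine ⟨φ S, ?_⟩
        rw [← hφ]; ring
      exact (hu.dvd_mul_right).mp h1
    have hαd : (X : Polynomial K) ^ (N - v * h) ∣ φ Cp := by
      rcases le_or_gt (v * h) N with hle | hlt
      · have h2 : (X : Polynomial K) ^ (N - v * h) * X ^ (v * h) ∣ φ Cp * X ^ (v * h) := by
          rw [← pow_add]
          have h3 : N - v * h + v * h = N := by omega
          rw [h3]; exact hdvd2
        exact (mul_dvd_mul_iff_right (pow_ne_zero _ Polynomial.X_ne_zero)).mp h2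
      · have h3 : N - v * h = 0 := by omega
        rw [h3, pow_zero]; exact one_dvd _
    obtain ⟨D, hD⟩ := hαd
    set ψ : Polynomial K →+* Polynomial (Polynomial K) :=
      mapRingHom (C : K →+* Polynomial K) with hψdef
    have hsplit : (C X : Polynomial (Polynomial K)) ∣ Cp - ψ (φ Cp) := by
      rw [Polynomial.C_dvd_iff_dvd_coeff]
      intro j
      rw [Polynomial.X_dvd_iff]
      simp only [hψdef, hφdef, Polynomial.coeff_sub, Polynomial.coe_mapRingHom,
        Polynomial.coeff_map]
      rw [Polynomial.coeff_C_zero, Polynomial.coeff_zero_eq_eval_zero]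
      simp
    obtain ⟨C1, hC1⟩ := hsplit
    have hψD : ψ (φ Cp) = X ^ (N - v * h) * ψ D := by
      rw [hD, map_mul, map_pow]
      simp [hψdef]
    have hCp : Cp = C X * C1 + X ^ (N - v * h) * ψ D := by
      linear_combination hC1 + hψD
    rw [Ideal.mem_span_pair]
    refine ⟨mkN C1, mkN (ψ D), ?_⟩
    rw [← map_mul, ← map_mul, ← map_add, Ideal.Quotient.eq, Ideal.mem_span_singleton]
    refine xreg N _ ?_
    have hid : C X * (C1 * (C X - X ^ v) ^ h + ψ D * (X ^ (N - v * h) * Q1) - Qp)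
        = X ^ N * S - X ^ (N - v * h) * (X ^ (v * h) * (ψ D * R1)) := by
      linear_combination hS - (C X - X ^ v) ^ h * hCp - X ^ (N - v * h) * ψ D * hQ1
    rw [hid]
    refine dvd_sub (Dvd.intro _ rfl) ?_
    rw [← mul_assoc, ← pow_add]
    exact Dvd.dvd.mul_right (pow_dvd_pow _ (by omega)) _
  · rw [Ideal.span_le]
    intro z hz
    simp only [Set.mem_insert_iff, Set.mem_singleton_iff] at hz
    rcases hz with rfl | rfl
    · rw [SetLike.mem_coe, Ideal.mem_colon_span_singleton (R := Polynomial (Polynomial K) ⧸ Ideal.span {(X : Polynomial (Polynomial K)) ^ N})]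
      exact Ideal.mem_span_singleton'.mpr ⟨mkN (C X), by rw [← map_mul, ← map_mul, mul_comm]⟩
    · rw [SetLike.mem_coe, Ideal.mem_colon_span_singleton (R := Polynomial (Polynomial K) ⧸ Ideal.span {(X : Polynomial (Polynomial K)) ^ N})]
      have heq : mkN (X ^ (N - v * h) * Q1) * mkN (C X)
          = mkN (X ^ (N - v * h)) * mkN ((C X - X ^ v) ^ h) := by
        rw [← map_mul, ← map_mul, Ideal.Quotient.eq, Ideal.mem_span_singleton]
        have hid2 : X ^ (N - v * h) * Q1 * C X - X ^ (N - v * h) * (C X - X ^ v) ^ h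
            = -(X ^ (N - v * h) * (X ^ (v * h) * R1)) := by
          linear_combination (-(X : Polynomial (Polynomial K)) ^ (N - v * h)) * hQ1
        rw [hid2]
        refine (dvd_neg (α := Polynomial (Polynomial K))).mpr ?_
        rw [← mul_assoc, ← pow_add]
        exact Dvd.dvd.mul_right (pow_dvd_pow _ (by omega)) _
      rw [heq]
      exact Ideal.mul_mem_left _ _ (Ideal.subset_span rfl)

end ResidualAux

/-- **Description of the residual ideals in one variable** (Evain, lemma
"description des résiduels", one-variable case).

`K` a field, `v ≥ 1`, `h ≥ 0`, `n₁ > … > n_r ≥ 1` with `n_a − n_{a+1} ≥ v`,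
`α_a = max(0, n_a − vh)` (truncated subtraction).  In `A_a = K[x][t]/(t^{n_a})`
(with `t` the outer variable `X`, `x = C X`), define recursively `J₁ = (f₁)`,
`J_a' = (J_a : x)`, `J_{a+1} = π_a(J_a')·A_{a+1}` where `f_a` is the class of
`(x − t^v)^h` and `π_a` the natural projection (the image ideal is rendered as
the pushforward to `A_{a+1}` of the pullback of `J_a'` to `K[x][t]`, which is
the ideal generated by the image of `J_a'` under `π_a`).  Then for `1 ≤ k ≤ r`,
`J_k'` is generated by `f_k` and `g₁,…,g_k`, where `g_i` is the unique element
with `x^i·g_i = t^{α_{k−i+1}}·f_k`. -/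
theorem residual_ideals_one_variable {K : Type*} [Field K] (v h r : ℕ)
    (hv : 1 ≤ v) (hr : 1 ≤ r) (n : ℕ → ℕ) (hnr : 1 ≤ n r)
    (hdec : ∀ a, 1 ≤ a → a < r → n (a + 1) + v ≤ n a)
    (J : (a : ℕ) → Ideal (Polynomial (Polynomial K) ⧸
      Ideal.span {(X : Polynomial (Polynomial K)) ^ n a}))
    (hJ1 : J 1 = Ideal.span {Ideal.Quotient.mk
      (Ideal.span {(X : Polynomial (Polynomial K)) ^ n 1}) ((C X - X ^ v) ^ h)})
    (hJrec : ∀ a, 1 ≤ a → a < r →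
      J (a + 1) =
        Ideal.map (Ideal.Quotient.mk (Ideal.span {(X : Polynomial (Polynomial K)) ^ n (a + 1)}))
          (Ideal.comap (Ideal.Quotient.mk (Ideal.span {(X : Polynomial (Polynomial K)) ^ n a}))
            ((J a).colon (Ideal.span {Ideal.Quotient.mk
              (Ideal.span {(X : Polynomial (Polynomial K)) ^ n a}) (C X)})))) :
    ∀ k, 1 ≤ k → k ≤ r →
      ∃ g : ℕ → Polynomial (Polynomial K) ⧸
          Ideal.span {(X : Polynomial (Polynomial K)) ^ n k},
        (∀ i, 1 ≤ i → i ≤ k →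
          (Ideal.Quotient.mk (Ideal.span {(X : Polynomial (Polynomial K)) ^ n k})
              (C X)) ^ i * g i =
            Ideal.Quotient.mk (Ideal.span {(X : Polynomial (Polynomial K)) ^ n k})
              (X ^ (n (k - i + 1) - v * h) * (C X - X ^ v) ^ h) ∧
          ∀ g', (Ideal.Quotient.mk (Ideal.span {(X : Polynomial (Polynomial K)) ^ n k})
              (C X)) ^ i * g' =
            Ideal.Quotient.mk (Ideal.span {(X : Polynomial (Polynomial K)) ^ n k})
              (X ^ (n (k - i + 1) - v * h) * (C X - X ^ v) ^ h) → g' = g i) ∧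
        (J k).colon (Ideal.span {Ideal.Quotient.mk
            (Ideal.span {(X : Polynomial (Polynomial K)) ^ n k}) (C X)}) =
          Ideal.span ({Ideal.Quotient.mk
            (Ideal.span {(X : Polynomial (Polynomial K)) ^ n k})
            ((C X - X ^ v) ^ h)} ∪ g '' Set.Icc 1 k) := by
  classical
  choose Q R hQR using fun i => ResidualAux.decomp (K := K) v h i
  have hQR1 : (C X - X ^ v : Polynomial (Polynomial K)) ^ h
      = C X * Q 1 + X ^ (v * h) * R 1 := by
    have h1 := hQR 1
    simpa using h1
  have chain : ∀ a b, 1 ≤ a → a ≤ b → b ≤ r → n b + (b - a) * v ≤ n a := by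
    intro a b ha hab
    induction b, hab using Nat.le_induction with
    | base => intro _; simp
    | succ b hb ih =>
      intro hbr
      have h1 := hdec b (le_trans ha hb) (by omega)
      have h2 := ih (by omega)
      have h3 : (b + 1 - a) * v = (b - a) * v + v := by
        have h4 : b + 1 - a = (b - a) + 1 := by omega
        rw [h4]; ring
      omega
  set G : ℕ → ℕ → Polynomial (Polynomial K) :=
    fun k i => X ^ (n (k - i + 1) - v * h) * Q i with hG
  have keyG : ∀ N k i, 1 ≤ i → i ≤ k → k ≤ r → N ≤ n k →
      (Ideal.Quotient.mk (Ideal.span {(X : Polynomial (Polynomial K)) ^ N}) (C X)) ^ i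
          * Ideal.Quotient.mk (Ideal.span {(X : Polynomial (Polynomial K)) ^ N}) (G k i)
        = Ideal.Quotient.mk (Ideal.span {(X : Polynomial (Polynomial K)) ^ N})
            (X ^ (n (k - i + 1) - v * h) * (C X - X ^ v) ^ h) := by
    intro N k i hi hik hkr hN
    refine ResidualAux.keyeq v h N i _ (Q i) (R i) (hQR i) ?_
    refine le_trans hN (ResidualAux.arith v h (n k) (n (k - i + 1)) i hi ?_)
    have h5 := chain (k - i + 1) k (by omega) (by omega) hkr
    have h6 : k - (k - i + 1) = i - 1 := by omega
    rw [h6] at h5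
    exact h5
  have main : ∀ k, 1 ≤ k → k ≤ r →
      (J k).colon (Ideal.span {Ideal.Quotient.mk
          (Ideal.span {(X : Polynomial (Polynomial K)) ^ n k}) (C X)}) =
        Ideal.span ({Ideal.Quotient.mk
          (Ideal.span {(X : Polynomial (Polynomial K)) ^ n k})
          ((C X - X ^ v) ^ h)} ∪
            (fun i => Ideal.Quotient.mk
              (Ideal.span {(X : Polynomial (Polynomial K)) ^ n k}) (G k i)) ''
                Set.Icc 1 k) := by
    intro k hk1
    induction k, hk1 using Nat.le_induction with
    | base =>
      intro _
      rw [hJ1, ResidualAux.colonF v h (n 1) (Q 1) (R 1) hQR1]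
      congr 1
      rw [Set.Icc_self, Set.image_singleton, Set.singleton_union]
    | succ k hk ih =>
      intro hk1r
      have hkr : k ≤ r := by omega
      have hklt : k < r := by omega
      have hle : n (k + 1) ≤ n k := by have := hdec k hk hklt; omega
      have ihc := ih hkr
      rw [hJrec k hk hklt, ihc]
      have himage : Ideal.span ({Ideal.Quotient.mk
            (Ideal.span {(X : Polynomial (Polynomial K)) ^ n k})
            ((C X - X ^ v) ^ h)} ∪
              (fun i => Ideal.Quotient.mk
                (Ideal.span {(X : Polynomial (Polynomial K)) ^ n k}) (G k i)) ''
                  Set.Icc 1 k)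
          = Ideal.map (Ideal.Quotient.mk
              (Ideal.span {(X : Polynomial (Polynomial K)) ^ n k}))
              (Ideal.span ({(C X - X ^ v) ^ h} ∪ (G k) '' Set.Icc 1 k)) := by
        rw [Ideal.map_span, Set.image_union, Set.image_singleton, Set.image_image]
      rw [himage, Ideal.comap_map_of_surjective _ Ideal.Quotient.mk_surjective]
      have hker : Ideal.comap (Ideal.Quotient.mk
            (Ideal.span {(X : Polynomial (Polynomial K)) ^ n k})) ⊥
          = Ideal.span {(X : Polynomial (Polynomial K)) ^ n k} := by
        rw [← RingHom.ker_eq_comap_bot, Ideal.mk_ker]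
      rw [hker, Ideal.map_sup]
      have hz : Ideal.map (Ideal.Quotient.mk
            (Ideal.span {(X : Polynomial (Polynomial K)) ^ n (k + 1)}))
            (Ideal.span {(X : Polynomial (Polynomial K)) ^ n k}) = ⊥ := by
        rw [Ideal.map_span, Set.image_singleton]
        have h7 : Ideal.Quotient.mk
            (Ideal.span {(X : Polynomial (Polynomial K)) ^ n (k + 1)})
            ((X : Polynomial (Polynomial K)) ^ n k) = 0 := by
          rw [Ideal.Quotient.eq_zero_iff_mem, Ideal.mem_span_singleton]
          exact pow_dvd_pow _ hle
        rw [h7]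
        simp
      rw [hz, sup_bot_eq]
      rw [Ideal.map_span, Set.image_union, Set.image_singleton, Set.image_image]
      have hgen : ∀ i ∈ Set.Icc 1 k,
          Ideal.Quotient.mk (Ideal.span {(X : Polynomial (Polynomial K)) ^ n (k + 1)})
              (G k i)
            = Ideal.Quotient.mk
                (Ideal.span {(X : Polynomial (Polynomial K)) ^ n (k + 1)}) (C X)
              * Ideal.Quotient.mk
                (Ideal.span {(X : Polynomial (Polynomial K)) ^ n (k + 1)})
                (G (k + 1) (i + 1)) := by
        intro i hi
        obtain ⟨hi1, hik⟩ := hi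
        refine ResidualAux.mk_cancel (n (k + 1)) i ?_
        rw [keyG (n (k + 1)) k i hi1 hik hkr hle]
        have h2 := keyG (n (k + 1)) (k + 1) (i + 1) (by omega) (by omega) hk1r le_rfl
        have hidx : (k + 1) - (i + 1) + 1 = k - i + 1 := by omega
        rw [hidx] at h2
        rw [← h2, pow_succ]
        ring
      have hIcc2 : Set.Icc 2 (k + 1) = (fun i => i + 1) '' Set.Icc 1 k := by
        ext j
        simp only [Set.mem_Icc, Set.mem_image]
        constructor
        · intro hj; exact ⟨j - 1, by omega, by omega⟩
        · rintro ⟨i, hi, rfl⟩; omega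
      have himg2 : (fun i => Ideal.Quotient.mk
            (Ideal.span {(X : Polynomial (Polynomial K)) ^ n (k + 1)}) (G k i)) ''
              Set.Icc 1 k
          = (fun b => Ideal.Quotient.mk
              (Ideal.span {(X : Polynomial (Polynomial K)) ^ n (k + 1)}) (C X) * b) ''
              ((fun i => Ideal.Quotient.mk
                (Ideal.span {(X : Polynomial (Polynomial K)) ^ n (k + 1)})
                (G (k + 1) i)) '' Set.Icc 2 (k + 1)) := by
        rw [hIcc2, Set.image_image, Set.image_image]
        exact Set.image_congr hgen
      rw [himg2, ResidualAux.colon_sup (A := Polynomial (Polynomial K) ⧸ Ideal.span {(X : Polynomial (Polynomial K)) ^ n (k + 1)}), ResidualAux.colonF v h (n (k + 1)) (Q 1) (R 1) hQR1,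
        ← Ideal.span_union]
      congr 1
      have hIcc : Set.Icc 1 (k + 1) = insert 1 (Set.Icc 2 (k + 1)) := by
        ext j
        simp only [Set.mem_Icc, Set.mem_insert_iff]
        omega
      rw [hIcc, Set.image_insert_eq]
      have hG1 : G (k + 1) 1 = X ^ (n (k + 1) - v * h) * Q 1 := rfl
      rw [hG1, Set.singleton_union, Set.insert_union, Set.singleton_union]
  intro k hk1 hkr
  refine ⟨fun i => Ideal.Quotient.mk
      (Ideal.span {(X : Polynomial (Polynomial K)) ^ n k}) (G k i), ?_, main k hk1 hkr⟩
  intro i hi1 hik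
  constructor
  · exact keyG (n k) k i hi1 hik hkr le_rfl
  · intro g' hg'
    refine ResidualAux.mk_cancel (n k) i ?_
    rw [hg', keyG (n k) k i hi1 hik hkr le_rfl]
end

section
/- Let K be a field, d ≥ 1, E ⊆ ℕ^d a finite staircase, v ≥ 1, and n₁ > n₂ > … > n_r ≥ 1 integers with n_a − n_{a+1} ≥ v for 1 ≤ a < r; set τ_a = ⌊n_a/v⌋. For each a let A_a = K[[x₁,…,x_d]][t]/(t^{n_a}) and π_a : A_a → A_{a+1} the natural projection. Define ideals recursively: J₁ ⊆ A₁ is generated by the elements (x₁ − t^v)^{c₁}·x₂^{c₂}···x_d^{c_d} for c ∈ ℕ^d ∖ E; J_a' = (J_a : x₁); J_{a+1} = π_a(J_a')·A_{a+1}. Then for every 1 ≤ k ≤ r, J_k is contained in the extension to A_k of the monomial ideal I^{T(E,τ_k)} (the ideal generated by the monomials x^c with c ∈ ℕ^d ∖ T(E,τ_k)). -/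
/-- A staircase of `ℕ^d`: a subset whose complement `C` satisfies `C + ℕ^d ⊆ C`.
Equivalently, `E` is downward closed. -/
def IsStaircase {d : ℕ} (E : Set (Fin d → ℕ)) : Prop :=
  ∀ c ∉ E, ∀ a : Fin d → ℕ, c + a ∉ E

/-- The monomial ideal `I^E` of `K[x₁,…,x_d]` generated by the monomials `x^c`
with `c` in the complement of `E`. -/
noncomputable def stairIdeal (K : Type*) [Field K] {d : ℕ} (E : Set (Fin d → ℕ)) :
    Ideal (MvPolynomial (Fin d) K) :=
  Ideal.span {g | ∃ c ∉ E, g = MvPolynomial.monomial (Finsupp.equivFunOnFinite.symm c) (1 : K)}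

/-- The monomial ideal `I^E` of `K[[x₁,…,x_d]]` generated by the monomials `x^c`
with `c` in the complement of `E`. -/
noncomputable def psStairIdeal (K : Type*) [Field K] {d : ℕ} (E : Set (Fin d → ℕ)) :
    Ideal (MvPowerSeries (Fin d) K) :=
  Ideal.span {g | ∃ c ∉ E, g = MvPowerSeries.monomial (Finsupp.equivFunOnFinite.symm c) (1 : K)}

/-- The stairSlice `T(E,τ) = {(0,a₂,…,a_d) : (τ,a₂,…,a_d) ∈ E}` of a staircase,
the first coordinate being the distinguished one. -/
def stairSlice {d : ℕ} (hd : 0 < d) (E : Set (Fin d → ℕ)) (τ : ℕ) : Set (Fin d → ℕ) :=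
  {e | e ⟨0, hd⟩ = 0 ∧ Function.update e ⟨0, hd⟩ τ ∈ E}

/-- The staircase `S(E,τ)` obtained from a staircase `E` by suppressing the stairSlice
of index `τ` in the first direction: its height function is `h_E − 1` where `τ < h_E`
and `h_E` elsewhere.  For a (downward closed) staircase `E` this is equivalent to the
membership description used here: `(a₁,a) ∈ S(E,τ)` iff `a₁ < τ` and `(a₁,a) ∈ E`,
or `τ ≤ a₁` and `(a₁+1,a) ∈ E`. -/
def stairSuppress {d : ℕ} (hd : 0 < d) (E : Set (Fin d → ℕ)) (τ : ℕ) : Set (Fin d → ℕ) :=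
  {e | (e ⟨0, hd⟩ < τ ∧ e ∈ E) ∨
    (τ ≤ e ⟨0, hd⟩ ∧ Function.update e ⟨0, hd⟩ (e ⟨0, hd⟩ + 1) ∈ E)}

/-- Iterated suppression `S(E,τ₁,…,τ_k) = S(S(E,τ₁,…,τ_{k−1}),τ_k)`,
the slices being indexed by `τ 1, …, τ k`. -/
def stairSuppressIter {d : ℕ} (hd : 0 < d) (E : Set (Fin d → ℕ)) (τ : ℕ → ℕ) :
    ℕ → Set (Fin d → ℕ)
  | 0 => E
  | k + 1 => stairSuppress hd (stairSuppressIter hd E τ k) (τ (k + 1))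

open Polynomial

namespace ResidualTraceAux

open Finset

variable {K : Type*} [Field K] {d : ℕ}

/-- The fundamental linear functionals: `lam v z b j y` is the coefficient of
`x^b t^j` in the image of `y` under the substitution `x_z ↦ x_z + t^v`. -/
noncomputable def lam (v : ℕ) (z : Fin d) (b : Fin d →₀ ℕ) (j : ℕ)
    (y : Polynomial (MvPowerSeries (Fin d) K)) : K :=
  ∑ i ∈ Finset.range (j / v + 1),
    ((b z + i).choose i : K) *
      MvPowerSeries.coeff (b + Finsupp.single z i) (y.coeff (j - v * i))

section Basic

variable (v : ℕ) (z : Fin d)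

lemma lam_add (b : Fin d →₀ ℕ) (j : ℕ) (y₁ y₂ : Polynomial (MvPowerSeries (Fin d) K)) :
    lam v z b j (y₁ + y₂) = lam v z b j y₁ + lam v z b j y₂ := by
  simp [lam, mul_add, Finset.sum_add_distrib]

lemma lam_sub (b : Fin d →₀ ℕ) (j : ℕ) (y₁ y₂ : Polynomial (MvPowerSeries (Fin d) K)) :
    lam v z b j (y₁ - y₂) = lam v z b j y₁ - lam v z b j y₂ := by
  simp [lam, mul_sub, Finset.sum_sub_distrib]

lemma lam_zero (b : Fin d →₀ ℕ) (j : ℕ) :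
    lam v z b j (0 : Polynomial (MvPowerSeries (Fin d) K)) = 0 := by
  simp [lam]

end Basic

/-- shrink a range-sum whose tail vanishes -/
lemma sum_ite_range {M : Type*} [AddCommMonoid M] {t m : ℕ} (h : t + 1 ≤ m) (f : ℕ → M) :
    ∑ i ∈ Finset.range m, (if i ≤ t then f i else 0) = ∑ i ∈ Finset.range (t + 1), f i := by
  rw [← Finset.sum_filter]
  congr 1
  ext i
  simp only [Finset.mem_filter, Finset.mem_range]
  omega

section CoeffHelpers

lemma coeff_X_mul_single (z : Fin d) (m : Fin d →₀ ℕ) (f : MvPowerSeries (Fin d) K) :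
    MvPowerSeries.coeff (m + Finsupp.single z 1) (MvPowerSeries.X z * f) =
      MvPowerSeries.coeff m f := by
  rw [MvPowerSeries.X_def, MvPowerSeries.coeff_monomial_mul, if_pos le_add_self, one_mul,
    add_tsub_cancel_right]

lemma coeff_X_mul_zero (z : Fin d) (m : Fin d →₀ ℕ) (hm : m z = 0)
    (f : MvPowerSeries (Fin d) K) :
    MvPowerSeries.coeff m (MvPowerSeries.X z * f) = 0 := by
  rw [MvPowerSeries.X_def, MvPowerSeries.coeff_monomial_mul, if_neg]
  intro h
  have := h z
  simp [hm] at this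

end CoeffHelpers

section Identities

variable {v : ℕ} (z : Fin d)

lemma lam_def (v : ℕ) (z : Fin d) (b : Fin d →₀ ℕ) (j : ℕ)
    (y : Polynomial (MvPowerSeries (Fin d) K)) :
    lam v z b j y = ∑ i ∈ Finset.range (j / v + 1),
      ((b z + i).choose i : K) *
        MvPowerSeries.coeff (b + Finsupp.single z i) (y.coeff (j - v * i)) := rfl

/-- multiplication by `t^N`. -/
lemma lam_Xpow_mul (hv : 0 < v) (b : Fin d →₀ ℕ) (j N : ℕ)
    (y : Polynomial (MvPowerSeries (Fin d) K)) :
    lam v z b j ((X : Polynomial (MvPowerSeries (Fin d) K)) ^ N * y) =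
      if N ≤ j then lam v z b (j - N) y else 0 := by
  by_cases hNj : N ≤ j
  · rw [if_pos hNj, lam_def, lam_def]
    have hdivle : (j - N) / v + 1 ≤ j / v + 1 := by
      have := Nat.div_le_div_right (c := v) (Nat.sub_le j N)
      omega
    rw [← sum_ite_range hdivle]
    apply Finset.sum_congr rfl
    intro i hi
    rw [Finset.mem_range] at hi
    have hvi : v * i ≤ j := by
      calc v * i ≤ v * (j / v) := Nat.mul_le_mul_left v (by omega)
      _ ≤ j := Nat.mul_div_le j v
    rw [Polynomial.coeff_X_pow_mul']
    have hcond : N ≤ j - v * i ↔ i ≤ (j - N) / v := by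
      rw [Nat.le_div_iff_mul_le hv, mul_comm i v]
      obtain ⟨w, hw⟩ : ∃ w, v * i = w := ⟨_, rfl⟩
      rw [hw] at hvi ⊢
      omega
    by_cases hc : N ≤ j - v * i
    · rw [if_pos hc, if_pos (hcond.1 hc)]
      rw [Nat.sub_right_comm]
    · rw [if_neg hc, if_neg (fun hh => hc (hcond.2 hh))]
      simp
  · rw [if_neg hNj, lam_def]
    apply Finset.sum_eq_zero
    intro i _
    have hni : ¬ N ≤ j - v * i := by
      obtain ⟨w, hw⟩ : ∃ w, v * i = w := ⟨_, rfl⟩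
      rw [hw]
      omega
    rw [Polynomial.coeff_X_pow_mul', if_neg hni]
    simp

/-- multiplication by `C x_z`, adding one to the distinguished coordinate. -/
lemma lam_CX_mul (hv : 0 < v) (b : Fin d →₀ ℕ) (j : ℕ)
    (y : Polynomial (MvPowerSeries (Fin d) K)) :
    lam v z (b + Finsupp.single z 1) j (C (MvPowerSeries.X z) * y) =
      lam v z b j y +
        (if v ≤ j then lam v z (b + Finsupp.single z 1) (j - v) y else 0) := by
  simp only [lam_def, Polynomial.coeff_C_mul, Finsupp.add_apply, Finsupp.single_eq_same]
  have hidx : ∀ i : ℕ, b + Finsupp.single z 1 + Finsupp.single z i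
      = (b + Finsupp.single z i) + Finsupp.single z 1 := fun i => by rw [add_right_comm]
  simp only [hidx, coeff_X_mul_single]
  by_cases hvj : v ≤ j
  · rw [if_pos hvj]
    have hu1 : 1 ≤ j / v := by
      rw [Nat.le_div_iff_mul_le hv]; omega
    have hu : (j - v) / v + 1 = j / v := by
      have := Nat.sub_mul_div j v 1
      simp only [Nat.mul_one] at this
      omega
    rw [hu]
    rw [Finset.sum_range_succ' (fun i => ((b z + 1 + i).choose i : K) *
      MvPowerSeries.coeff (b + Finsupp.single z i) (y.coeff (j - v * i)))]
    rw [Finset.sum_range_succ' (fun i => ((b z + i).choose i : K) *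
      MvPowerSeries.coeff (b + Finsupp.single z i) (y.coeff (j - v * i)))]
    have hsplit : ∀ i ∈ Finset.range (j / v),
        ((b z + 1 + (i + 1)).choose (i + 1) : K) *
          MvPowerSeries.coeff (b + Finsupp.single z (i + 1)) (y.coeff (j - v * (i + 1))) =
        ((b z + (i + 1)).choose (i + 1) : K) *
          MvPowerSeries.coeff (b + Finsupp.single z (i + 1)) (y.coeff (j - v * (i + 1))) +
        ((b z + 1 + i).choose i : K) *
          MvPowerSeries.coeff ((b + Finsupp.single z i) + Finsupp.single z 1)
            (y.coeff (j - v - v * i)) := by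
      intro i _
      have h1 : (b + Finsupp.single z i) + Finsupp.single z 1 = b + Finsupp.single z (i + 1) := by
        rw [add_assoc, ← Finsupp.single_add]
      have h2 : j - v - v * i = j - v * (i + 1) := by
        rw [Nat.sub_sub, Nat.mul_succ, Nat.add_comm]
      rw [h1, h2, ← add_mul]
      congr 1
      rw [← Nat.cast_add]
      congr 1
      have h3 : b z + 1 + (i + 1) = (b z + 1 + i) + 1 := rfl
      rw [h3, Nat.choose_succ_succ]
      have h4 : b z + (i + 1) = b z + 1 + i := by omega
      rw [h4, Nat.add_comm]
    rw [Finset.sum_congr rfl hsplit, Finset.sum_add_distrib]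
    simp only [Nat.choose_zero_right, Nat.cast_one, one_mul]
    ring
  · rw [if_neg hvj, add_zero]
    have h0 : j / v = 0 := Nat.div_eq_of_lt (by omega)
    rw [h0]
    simp

/-- multiplication by `C x_z`, zero distinguished coordinate. -/
lemma lam_CX_mul_zero (hv : 0 < v) (b : Fin d →₀ ℕ) (hbz : b z = 0) (j : ℕ)
    (y : Polynomial (MvPowerSeries (Fin d) K)) :
    lam v z b j (C (MvPowerSeries.X z) * y) =
      if v ≤ j then lam v z b (j - v) y else 0 := by
  simp only [lam_def, Polynomial.coeff_C_mul]
  rw [Finset.sum_range_succ' (fun i => ((b z + i).choose i : K) *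
    MvPowerSeries.coeff (b + Finsupp.single z i)
      (MvPowerSeries.X z * y.coeff (j - v * i)))]
  have htail : ((b z + 0).choose 0 : K) *
      MvPowerSeries.coeff (b + Finsupp.single z 0)
        (MvPowerSeries.X z * y.coeff (j - v * 0)) = 0 := by
    rw [show b + Finsupp.single z 0 = b by simp]
    rw [coeff_X_mul_zero z b hbz]
    simp
  rw [htail, add_zero]
  have hterm : ∀ i, ((b z + (i + 1)).choose (i + 1) : K) *
      MvPowerSeries.coeff (b + Finsupp.single z (i + 1))
        (MvPowerSeries.X z * y.coeff (j - v * (i + 1))) =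
      ((b z + i).choose i : K) *
        MvPowerSeries.coeff (b + Finsupp.single z i) (y.coeff (j - v * (i + 1))) := by
    intro i
    rw [show b + Finsupp.single z (i + 1) = (b + Finsupp.single z i) + Finsupp.single z 1 by
      rw [add_assoc, ← Finsupp.single_add]]
    rw [coeff_X_mul_single]
    simp [hbz]
  rw [Finset.sum_congr rfl (fun i _ => hterm i)]
  by_cases hvj : v ≤ j
  · rw [if_pos hvj]
    have hu1 : 1 ≤ j / v := by
      rw [Nat.le_div_iff_mul_le hv]; omega
    have hu : (j - v) / v + 1 = j / v := by
      have := Nat.sub_mul_div j v 1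
      simp only [Nat.mul_one] at this
      omega
    rw [hu]
    apply Finset.sum_congr rfl
    intro i _
    have h2 : j - v * (i + 1) = j - v - v * i := by
      rw [Nat.sub_sub, Nat.mul_succ, Nat.add_comm]
    rw [h2]
  · rw [if_neg hvj]
    have h0 : j / v = 0 := Nat.div_eq_of_lt (by omega)
    rw [h0]
    simp

/-- multiplication by `(C x_z - t^v)`, nonzero distinguished coordinate: clean peeling. -/
lemma lam_CXsub_single (hv : 0 < v) (b : Fin d →₀ ℕ) (j : ℕ)
    (y : Polynomial (MvPowerSeries (Fin d) K)) :
    lam v z (b + Finsupp.single z 1) j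
      ((C (MvPowerSeries.X z) - (X : Polynomial (MvPowerSeries (Fin d) K)) ^ v) * y) =
      lam v z b j y := by
  rw [sub_mul, lam_sub, lam_CX_mul z hv, lam_Xpow_mul z hv]
  ring

lemma lam_CXsub_zero (hv : 0 < v) (b : Fin d →₀ ℕ) (hbz : b z = 0) (j : ℕ)
    (y : Polynomial (MvPowerSeries (Fin d) K)) :
    lam v z b j
      ((C (MvPowerSeries.X z) - (X : Polynomial (MvPowerSeries (Fin d) K)) ^ v) * y) = 0 := by
  rw [sub_mul, lam_sub, lam_CX_mul_zero z hv b hbz, lam_Xpow_mul z hv]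
  ring

/-- peeling a power of `(C x_z - t^v)`. -/
lemma lam_peel (hv : 0 < v) (p : ℕ) (w : Polynomial (MvPowerSeries (Fin d) K)) :
    ∀ (b : Fin d →₀ ℕ) (j : ℕ),
      lam v z b j
        ((C (MvPowerSeries.X z) - (X : Polynomial (MvPowerSeries (Fin d) K)) ^ v) ^ p * w) =
      if p ≤ b z then lam v z (b - Finsupp.single z p) j w else 0 := by
  induction p with
  | zero =>
      intro b j
      rw [pow_zero, one_mul, if_pos (Nat.zero_le _),
        show b - Finsupp.single z 0 = b by simp]
  | succ p ih =>
      intro b j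
      rw [pow_succ', mul_assoc]
      by_cases hbz : b z = 0
      · rw [lam_CXsub_zero z hv b hbz, if_neg (by omega)]
      · have hb' : (b - Finsupp.single z 1) + Finsupp.single z 1 = b := by
          ext a
          by_cases ha : a = z
          · subst ha
            simp only [Finsupp.add_apply, Finsupp.tsub_apply, Finsupp.single_eq_same]
            omega
          · simp [Finsupp.single_eq_of_ne' (fun h => ha h.symm)]
        rw [← hb', lam_CXsub_single z hv, ih, hb']
        simp only [Finsupp.tsub_apply, Finsupp.single_eq_same]
        have hexp : (b - Finsupp.single z 1) - Finsupp.single z p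
            = b - Finsupp.single z (p + 1) := by
          ext a
          by_cases ha : a = z
          · subst ha
            simp only [Finsupp.tsub_apply, Finsupp.single_eq_same]
            omega
          · simp [Finsupp.single_eq_of_ne' (fun h => ha h.symm)]
        rw [hexp]
        by_cases hp : p + 1 ≤ b z
        · rw [if_pos (by omega : p ≤ b z - 1), if_pos hp]
        · rw [if_neg (by omega : ¬ p ≤ b z - 1), if_neg hp]

end Identities

section Closure

variable {v : ℕ} (z : Fin d)

/-- multiplication by a constant monomial not involving the distinguished variable. -/
lemma lam_C_monomial_mul (m : Fin d →₀ ℕ) (hmz : m z = 0) (a : K) (b : Fin d →₀ ℕ) (j : ℕ)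
    (y : Polynomial (MvPowerSeries (Fin d) K)) :
    lam v z b j (C (MvPowerSeries.monomial m a) * y) =
      if m ≤ b then a * lam v z (b - m) j y else 0 := by
  simp only [lam_def, Polynomial.coeff_C_mul, MvPowerSeries.coeff_monomial_mul]
  have hiff : ∀ i : ℕ, m ≤ b + Finsupp.single z i ↔ m ≤ b := by
    intro i
    constructor
    · intro h
      rw [Finsupp.le_def] at h ⊢
      intro a0
      by_cases ha : a0 = z
      · subst ha; simp [hmz]
      · have h2 := h a0
        simpa [Finsupp.single_eq_of_ne' (fun hh => ha hh.symm)] using h2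
    · intro h
      refine le_trans h ?_
      rw [Finsupp.le_def]
      intro a0
      simp only [Finsupp.add_apply]
      exact Nat.le_add_right _ _
  by_cases hm : m ≤ b
  · rw [if_pos hm, Finset.mul_sum]
    apply Finset.sum_congr rfl
    intro i _
    rw [if_pos ((hiff i).2 hm)]
    have hidx : b + Finsupp.single z i - m = (b - m) + Finsupp.single z i := by
      ext a0
      by_cases ha : a0 = z
      · subst ha
        simp only [Finsupp.tsub_apply, Finsupp.add_apply, Finsupp.single_eq_same, hmz]
        omega
      · simp only [Finsupp.tsub_apply, Finsupp.add_apply,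
          Finsupp.single_eq_of_ne' (fun hh => ha hh.symm), add_zero]
    rw [hidx]
    simp only [Finsupp.tsub_apply, hmz, Nat.sub_zero]
    ring
  · rw [if_neg hm]
    apply Finset.sum_eq_zero
    intro i _
    rw [if_neg (fun hh => hm ((hiff i).1 hh))]
    simp

variable (E : Set (Fin d → ℕ)) (N : ℕ)

/-- the set of polynomials all whose `lam`-functionals over `E` vanish below level `N`. -/
def lamSet : Set (Polynomial (MvPowerSeries (Fin d) K)) :=
  {y | ∀ (b : Fin d →₀ ℕ) (j : ℕ), ⇑b ∈ E → j < N → lam v z b j y = 0}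

variable {z E N}

lemma coe_mem_of_le (hEd : ∀ x y : Fin d → ℕ, x ≤ y → y ∈ E → x ∈ E)
    {b b' : Fin d →₀ ℕ} (h : ∀ i, b i ≤ b' i) (hb' : ⇑b' ∈ E) : ⇑b ∈ E :=
  hEd _ _ (fun i => h i) hb'

lemma lamSet_zero : (0 : Polynomial (MvPowerSeries (Fin d) K)) ∈ lamSet (v := v) z E N :=
  fun b j _ _ => lam_zero v z b j

lemma lamSet_add {y₁ y₂ : Polynomial (MvPowerSeries (Fin d) K)}
    (h₁ : y₁ ∈ lamSet (v := v) z E N) (h₂ : y₂ ∈ lamSet (v := v) z E N) :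
    y₁ + y₂ ∈ lamSet (v := v) z E N := by
  intro b j hb hj
  rw [lam_add, h₁ b j hb hj, h₂ b j hb hj, add_zero]

lemma lamSet_sum {ι : Type*} (t : Finset ι) (f : ι → Polynomial (MvPowerSeries (Fin d) K))
    (hf : ∀ i ∈ t, f i ∈ lamSet (v := v) z E N) :
    (∑ i ∈ t, f i) ∈ lamSet (v := v) z E N := by
  classical
  induction t using Finset.induction_on with
  | empty => simpa using lamSet_zero
  | insert _ _ hni ih =>
      rw [Finset.sum_insert hni]
      exact lamSet_add (hf _ (Finset.mem_insert_self _ _))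
        (ih fun i hi => hf i (Finset.mem_insert_of_mem hi))

lemma lamSet_Xpow (hv : 0 < v) (N0 : ℕ) {y : Polynomial (MvPowerSeries (Fin d) K)}
    (hy : y ∈ lamSet (v := v) z E N) :
    (X : Polynomial (MvPowerSeries (Fin d) K)) ^ N0 * y ∈ lamSet (v := v) z E N := by
  intro b j hb hj
  rw [lam_Xpow_mul z hv]
  split_ifs with h
  · exact hy b (j - N0) hb (by omega)
  · rfl

lemma lamSet_CX (hEd : ∀ x y : Fin d → ℕ, x ≤ y → y ∈ E → x ∈ E) (hv : 0 < v)
    {y : Polynomial (MvPowerSeries (Fin d) K)} (hy : y ∈ lamSet (v := v) z E N) :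
    C (MvPowerSeries.X z) * y ∈ lamSet (v := v) z E N := by
  intro b j hb hj
  by_cases hbz : b z = 0
  · rw [lam_CX_mul_zero z hv b hbz]
    split_ifs with h
    · exact hy b (j - v) hb (by omega)
    · rfl
  · have hb' : (b - Finsupp.single z 1) + Finsupp.single z 1 = b := by
      ext a
      by_cases ha : a = z
      · subst ha
        simp only [Finsupp.add_apply, Finsupp.tsub_apply, Finsupp.single_eq_same]
        omega
      · simp [Finsupp.single_eq_of_ne' (fun h => ha h.symm)]
    rw [← hb', lam_CX_mul z hv, hb']
    have h1 : lam v z (b - Finsupp.single z 1) j y = 0 :=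
      hy _ j (coe_mem_of_le hEd (fun i => by
        simp only [Finsupp.tsub_apply]; omega) hb) hj
    rw [h1, zero_add]
    split_ifs with h2
    · exact hy b (j - v) hb (by omega)
    · rfl

lemma lamSet_CXpow (hEd : ∀ x y : Fin d → ℕ, x ≤ y → y ∈ E → x ∈ E) (hv : 0 < v)
    (p : ℕ) {y : Polynomial (MvPowerSeries (Fin d) K)} (hy : y ∈ lamSet (v := v) z E N) :
    (C (MvPowerSeries.X z)) ^ p * y ∈ lamSet (v := v) z E N := by
  induction p with
  | zero => simpa using hy
  | succ p ih =>
      rw [pow_succ', mul_assoc]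
      exact lamSet_CX hEd hv ih

lemma lamSet_Cmon0 (hEd : ∀ x y : Fin d → ℕ, x ≤ y → y ∈ E → x ∈ E) (hv : 0 < v)
    (m : Fin d →₀ ℕ) (hmz : m z = 0) (a : K)
    {y : Polynomial (MvPowerSeries (Fin d) K)} (hy : y ∈ lamSet (v := v) z E N) :
    C (MvPowerSeries.monomial m a) * y ∈ lamSet (v := v) z E N := by
  intro b j hb hj
  rw [lam_C_monomial_mul z m hmz]
  split_ifs with h
  · rw [hy (b - m) j (coe_mem_of_le hEd (fun i => by
      simp only [Finsupp.tsub_apply]; omega) hb) hj, mul_zero]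
  · rfl

lemma lamSet_Cs (hEd : ∀ x y : Fin d → ℕ, x ≤ y → y ∈ E → x ∈ E) (hv : 0 < v)
    (s : MvPowerSeries (Fin d) K)
    {y : Polynomial (MvPowerSeries (Fin d) K)} (hy : y ∈ lamSet (v := v) z E N) :
    C s * y ∈ lamSet (v := v) z E N := by
  intro b j hb hj
  classical
  set bb := b + Finsupp.single z (j / v) with hbb
  set str : MvPowerSeries (Fin d) K :=
    ∑ m ∈ Finset.Iic bb, (MvPowerSeries.monomial m (MvPowerSeries.coeff m s)) with hstr
  have htr : lam v z b j (C s * y) = lam v z b j (C str * y) := by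
    simp only [lam_def, Polynomial.coeff_C_mul]
    apply Finset.sum_congr rfl
    intro i hi
    rw [Finset.mem_range] at hi
    congr 1
    rw [MvPowerSeries.coeff_mul, MvPowerSeries.coeff_mul]
    apply Finset.sum_congr rfl
    intro p hp
    rw [Finset.HasAntidiagonal.mem_antidiagonal] at hp
    have hple : p.1 ≤ bb := by
      have h1 : p.1 ≤ b + Finsupp.single z i := by
        rw [← hp]; exact self_le_add_right _ _
      refine le_trans h1 ?_
      rw [hbb]
      exact add_le_add le_rfl (Finsupp.single_le_single.2 (by omega))
    have hcoeq : MvPowerSeries.coeff p.1 str = MvPowerSeries.coeff p.1 s := by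
      rw [hstr, map_sum]
      rw [Finset.sum_eq_single p.1]
      · rw [MvPowerSeries.coeff_monomial_same]
      · intro m _ hne
        rw [MvPowerSeries.coeff_monomial, if_neg (fun h => hne h.symm)]
      · intro hnot
        exact absurd (Finset.mem_Iic.2 hple) hnot
    rw [hcoeq]
  rw [htr]
  have hCstr : C str * y = ∑ m ∈ Finset.Iic bb,
      C (MvPowerSeries.monomial m (MvPowerSeries.coeff m s)) * y := by
    rw [hstr, map_sum, Finset.sum_mul]
  rw [hCstr]
  refine lamSet_sum _ _ ?_ b j hb hj
  intro m _
  have hm' : MvPowerSeries.monomial m (MvPowerSeries.coeff m s)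
      = (MvPowerSeries.X z) ^ (m z) * MvPowerSeries.monomial (m.erase z)
          (MvPowerSeries.coeff m s) := by
    rw [MvPowerSeries.X_pow_eq, MvPowerSeries.monomial_mul_monomial, one_mul,
      Finsupp.single_add_erase]
  rw [hm', map_mul, map_pow, mul_assoc]
  exact lamSet_CXpow hEd hv _ (lamSet_Cmon0 hEd hv _ (Finsupp.erase_same) _ hy)

lemma lamSet_mul (hEd : ∀ x y : Fin d → ℕ, x ≤ y → y ∈ E → x ∈ E) (hv : 0 < v)
    (p : Polynomial (MvPowerSeries (Fin d) K))
    {y : Polynomial (MvPowerSeries (Fin d) K)} (hy : y ∈ lamSet (v := v) z E N) :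
    p * y ∈ lamSet (v := v) z E N := by
  induction p using Polynomial.induction_on' with
  | add p q hp hq => rw [add_mul]; exact lamSet_add hp hq
  | monomial n a =>
      rw [← Polynomial.C_mul_X_pow_eq_monomial, mul_assoc]
      exact lamSet_Cs hEd hv a (lamSet_Xpow hv n hy)

variable (z E N) in
/-- `lamSet` as an ideal. -/
def lamIdeal (hEd : ∀ x y : Fin d → ℕ, x ≤ y → y ∈ E → x ∈ E) (hv : 0 < v) :
    Ideal (Polynomial (MvPowerSeries (Fin d) K)) where
  carrier := lamSet (v := v) z E N
  zero_mem' := lamSet_zero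
  add_mem' := fun h1 h2 => lamSet_add h1 h2
  smul_mem' := fun p y hy => by
    simpa [smul_eq_mul] using lamSet_mul hEd hv p hy

lemma mem_lamIdeal (hEd : ∀ x y : Fin d → ℕ, x ≤ y → y ∈ E → x ∈ E) (hv : 0 < v)
    {y : Polynomial (MvPowerSeries (Fin d) K)} :
    y ∈ lamIdeal z E N hEd hv ↔ y ∈ lamSet (v := v) z E N := Iff.rfl

end Closure

section Chains

variable {v : ℕ} (z : Fin d) {E : Set (Fin d → ℕ)}

/-- the upward chain lemma: from vanishing of the `lam` of `C x_z * x`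
on a region, deduce vanishing of the `lam` of `x` on the region shrunk by `v`. -/
lemma lam_up (hv : 0 < v) (hEd : ∀ x y : Fin d → ℕ, x ≤ y → y ∈ E → x ∈ E)
    (x : Polynomial (MvPowerSeries (Fin d) K)) (θ : ℕ)
    (H : ∀ (c : Fin d →₀ ℕ) (Jj : ℕ), ⇑c ∈ E → Jj + v * c z < θ →
      lam v z c Jj (C (MvPowerSeries.X z) * x) = 0) :
    ∀ (p : ℕ) (b : Fin d →₀ ℕ) (j : ℕ), b z = p → ⇑b ∈ E → j + v * b z + v < θ →
      lam v z b j x = 0 := by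
  intro p
  induction p with
  | zero =>
      intro b j hbz hb hbound
      have h1 := H b (j + v) hb (by omega)
      rw [lam_CX_mul_zero z hv b hbz, if_pos (by omega : v ≤ j + v),
        Nat.add_sub_cancel] at h1
      exact h1
  | succ p ih =>
      intro b j hbz hb hbound
      have h1 := H b (j + v) hb (by omega)
      have hb' : (b - Finsupp.single z 1) + Finsupp.single z 1 = b := by
        ext a
        by_cases ha : a = z
        · subst ha
          simp only [Finsupp.add_apply, Finsupp.tsub_apply, Finsupp.single_eq_same]
          omega
        · simp [Finsupp.single_eq_of_ne' (fun h => ha h.symm)]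
      rw [← hb', lam_CX_mul z hv, hb', if_pos (by omega : v ≤ j + v),
        Nat.add_sub_cancel] at h1
      have h2 : lam v z (b - Finsupp.single z 1) (j + v) x = 0 := by
        apply ih
        · simp only [Finsupp.tsub_apply, Finsupp.single_eq_same]
          omega
        · exact coe_mem_of_le hEd (fun i => by
            simp only [Finsupp.tsub_apply]; omega) hb
        · simp only [Finsupp.tsub_apply, Finsupp.single_eq_same, hbz, Nat.add_sub_cancel]
          have hm : v * (p + 1) = v * p + v := by ring
          rw [hbz] at hbound
          omega
      rw [h2, zero_add] at h1
      exact h1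

/-- conversion from vanishing of the `lam`-functionals to vanishing of
plain coefficients, by triangularity. -/
lemma lam_conv (hv : 0 < v) (hEd : ∀ x y : Fin d → ℕ, x ≤ y → y ∈ E → x ∈ E)
    (x : Polynomial (MvPowerSeries (Fin d) K)) (Nk : ℕ)
    (H : ∀ (b : Fin d →₀ ℕ) (j : ℕ), ⇑b ∈ E → j + v * b z < Nk → lam v z b j x = 0) :
    ∀ (j : ℕ) (b : Fin d →₀ ℕ), ⇑(b + Finsupp.single z (j / v)) ∈ E → j + v * b z < Nk →
      MvPowerSeries.coeff b (x.coeff j) = 0 := by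
  intro j
  induction j using Nat.strong_induction_on with
  | _ j ihj =>
    intro b hbE hbound
    have hbE' : ⇑b ∈ E := coe_mem_of_le hEd (fun i => by
      simp only [Finsupp.add_apply]; omega) hbE
    have hlam := H b j hbE' hbound
    rw [lam_def, Finset.sum_range_succ'] at hlam
    have hzero : ∀ i ∈ Finset.range (j / v),
        ((b z + (i + 1)).choose (i + 1) : K) *
          MvPowerSeries.coeff (b + Finsupp.single z (i + 1))
            (x.coeff (j - v * (i + 1))) = 0 := by
      intro i hi
      rw [Finset.mem_range] at hi
      have hvi : v * (i + 1) ≤ j := by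
        calc v * (i + 1) ≤ v * (j / v) := Nat.mul_le_mul_left v (by omega)
        _ ≤ j := Nat.mul_div_le j v
      have hpos : 0 < v * (i + 1) := Nat.mul_pos hv (Nat.succ_pos i)
      have hlt : j - v * (i + 1) < j := by omega
      have hdiv : (j - v * (i + 1)) / v = j / v - (i + 1) :=
        Nat.sub_mul_div j v (i + 1)
      have harg : (b + Finsupp.single z (i + 1)) +
          Finsupp.single z ((j - v * (i + 1)) / v) = b + Finsupp.single z (j / v) := by
        rw [hdiv, add_assoc, ← Finsupp.single_add]
        congr 2
        omega
      have hres := ihj (j - v * (i + 1)) hlt (b + Finsupp.single z (i + 1))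
        (by rw [harg]; exact hbE) (by
          simp only [Finsupp.add_apply, Finsupp.single_eq_same]
          have hmadd : v * (b z + (i + 1)) = v * b z + v * (i + 1) := by ring
          omega)
      rw [hres, mul_zero]
    rw [Finset.sum_eq_zero hzero, zero_add] at hlam
    simpa using hlam

end Chains

section Generators

variable {v : ℕ} (z : Fin d)

lemma prod_X_pow_eq (c : Fin d → ℕ) (A : Finset (Fin d)) :
    (∏ i ∈ A, (MvPowerSeries.X i : MvPowerSeries (Fin d) K) ^ c i)
      = MvPowerSeries.monomial (∑ i ∈ A, Finsupp.single i (c i)) 1 := by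
  classical
  induction A using Finset.induction_on with
  | empty => simp
  | insert _ _ ha ih =>
      rw [Finset.prod_insert ha, Finset.sum_insert ha, ih, MvPowerSeries.X_pow_eq,
        MvPowerSeries.monomial_mul_monomial, one_mul]

/-- the generators of `J₁` kill all the `lam`-functionals over `E`. -/
lemma lam_gen (hv : 0 < v) {E : Set (Fin d → ℕ)} (c : Fin d → ℕ) (hc : c ∉ E)
    (b : Fin d →₀ ℕ) (hb : ⇑b ∈ E) (j : ℕ) :
    lam v z b j ((C (MvPowerSeries.X z) - (X : Polynomial (MvPowerSeries (Fin d) K)) ^ v) ^ (c z) *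
      C (∏ i ∈ Finset.univ.erase z, MvPowerSeries.X i ^ c i)) = 0 := by
  classical
  rw [prod_X_pow_eq, lam_peel z hv]
  split_ifs with hcz
  · rw [lam_def]
    apply Finset.sum_eq_zero
    intro i _
    rw [Polynomial.coeff_C]
    by_cases hj0 : j - v * i = 0
    · rw [if_pos hj0, MvPowerSeries.coeff_monomial, if_neg, mul_zero]
      intro heq
      have hmz : (∑ i' ∈ Finset.univ.erase z, Finsupp.single i' (c i')) z = 0 := by
        rw [Finsupp.finset_sum_apply]
        apply Finset.sum_eq_zero
        intro i' hi'
        rw [Finset.mem_erase] at hi'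
        exact Finsupp.single_eq_of_ne' hi'.1
      have hma : ∀ a : Fin d, a ≠ z →
          (∑ i' ∈ Finset.univ.erase z, Finsupp.single i' (c i')) a = c a := by
        intro a ha
        rw [Finsupp.finset_sum_apply, Finset.sum_eq_single a]
        · exact Finsupp.single_eq_same
        · intro i' _ hne
          exact Finsupp.single_eq_of_ne' hne
        · intro hna
          exact absurd (Finset.mem_erase.2 ⟨ha, Finset.mem_univ a⟩) hna
      have hzeq := Finsupp.ext_iff.1 heq z
      simp only [Finsupp.add_apply, Finsupp.tsub_apply, Finsupp.single_eq_same, hmz] at hzeq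
      -- hzeq : b z - c z + i = 0
      have hbz : b z = c z := by omega
      have hbc : ⇑b = c := by
        funext a
        by_cases ha : a = z
        · subst ha; exact hbz
        · have haeq := Finsupp.ext_iff.1 heq a
          simp only [Finsupp.add_apply, Finsupp.tsub_apply,
            Finsupp.single_eq_of_ne' (fun hh => ha hh.symm), add_zero, Nat.sub_zero,
            hma a ha] at haeq
          exact haeq
      rw [← hbc] at hc
      exact hc hb
    · rw [if_neg hj0]
      simp
  · rfl

end Generators

section MembershipLemma

/-- membership in a power-series monomial ideal from coefficient vanishing,
for a target set contained in a finite box. -/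
lemma mem_psStairIdeal_of_coeff (T : Set (Fin d → ℕ)) (bnd : Fin d →₀ ℕ)
    (hbnd : ∀ m : Fin d →₀ ℕ, ⇑m ∈ T → ∀ i, m i < bnd i)
    (s : MvPowerSeries (Fin d) K)
    (hs : ∀ m : Fin d →₀ ℕ, ⇑m ∈ T → MvPowerSeries.coeff m s = 0) :
    s ∈ psStairIdeal K T := by
  classical
  set F := (Finset.Iic bnd).filter (fun μ : Fin d →₀ ℕ => ¬ (⇑μ ∈ T)) with hF
  set g : (Fin d →₀ ℕ) → MvPowerSeries (Fin d) K :=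
    fun μ e => if (μ + e) ⊓ bnd = μ then MvPowerSeries.coeff (μ + e) s else 0 with hg
  have hdecomp : s = ∑ μ ∈ F, MvPowerSeries.monomial μ 1 * g μ := by
    apply MvPowerSeries.ext
    intro m
    rw [map_sum]
    by_cases hm : ⇑m ∈ T
    · rw [hs m hm]
      symm
      apply Finset.sum_eq_zero
      intro μ _
      rw [MvPowerSeries.coeff_monomial_mul]
      split_ifs with h1
      · rw [one_mul]
        show (if (μ + (m - μ)) ⊓ bnd = μ then MvPowerSeries.coeff (μ + (m - μ)) s else 0) = 0
        rw [add_tsub_cancel_of_le h1]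
        split_ifs with h2
        · exact hs m hm
        · rfl
      · rfl
    · have hμT : ¬ (⇑(m ⊓ bnd) ∈ T) := by
        intro hT
        have hall : ∀ i, m i ≤ bnd i := by
          intro i
          have h1 := hbnd (m ⊓ bnd) hT i
          rw [Finsupp.inf_apply] at h1
          rcases min_lt_iff.mp h1 with h2 | h2
          · omega
          · exact absurd h2 (lt_irrefl _)
        have hmeq : m ⊓ bnd = m := inf_eq_left.2 (Finsupp.le_def.2 hall)
        rw [hmeq] at hT
        exact hm hT
      have hμF : m ⊓ bnd ∈ F := by
        rw [hF, Finset.mem_filter, Finset.mem_Iic]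
        exact ⟨inf_le_right, hμT⟩
      rw [Finset.sum_eq_single (m ⊓ bnd)]
      · rw [MvPowerSeries.coeff_monomial_mul, if_pos inf_le_left, one_mul]
        show MvPowerSeries.coeff m s = (if (m ⊓ bnd + (m - m ⊓ bnd)) ⊓ bnd = m ⊓ bnd then
          MvPowerSeries.coeff (m ⊓ bnd + (m - m ⊓ bnd)) s else 0)
        rw [add_tsub_cancel_of_le inf_le_left, if_pos rfl]
      · intro μ _ hne
        rw [MvPowerSeries.coeff_monomial_mul]
        split_ifs with h1
        · rw [one_mul]
          show (if (μ + (m - μ)) ⊓ bnd = μ then MvPowerSeries.coeff (μ + (m - μ)) s else 0) = 0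
          rw [add_tsub_cancel_of_le h1, if_neg (fun h => hne h.symm)]
        · rfl
      · intro h
        exact absurd hμF h
  rw [hdecomp]
  apply Ideal.sum_mem
  intro μ hμ
  rw [hF, Finset.mem_filter] at hμ
  apply Ideal.mul_mem_right
  apply Ideal.subset_span
  exact ⟨⇑μ, hμ.2, by rw [Finsupp.equivFunOnFinite_symm_coe]⟩

end MembershipLemma

end ResidualTraceAux

set_option maxHeartbeats 1000000 in
set_option synthInstance.maxHeartbeats 200000 in
/-- **Trace of the residual ideal on the slice** (Evain, corollary "trace du
résiduel", case of a single point `s = 1`).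

`E ⊆ ℕ^d` a finite staircase, `v ≥ 1`, `n₁ > … > n_r ≥ 1` with
`n_a − n_{a+1} ≥ v`, `τ_a = ⌊n_a/v⌋`.  In `A_a = K[[x₁,…,x_d]][t]/(t^{n_a})`
(with `t` the outer polynomial variable `X`), define recursively `J₁` as the
ideal generated by the `(x₁ − t^v)^{c₁}x₂^{c₂}⋯x_d^{c_d}`, `c ∉ E`;
`J_a' = (J_a : x₁)`; `J_{a+1} = π_a(J_a')·A_{a+1}` (the image ideal under the
natural projection `π_a`, rendered as the pushforward to `A_{a+1}` of the
pullback of `J_a'` to `K[[x₁,…,x_d]][t]`).  Then for `1 ≤ k ≤ r`, `J_k` is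
contained in the extension to `A_k` of the monomial ideal `I^{T(E,τ_k)}`. -/
theorem residual_trace {K : Type*} [Field K] {d : ℕ} (hd : 0 < d)
    (E : Set (Fin d → ℕ)) (hfin : E.Finite) (hE : IsStaircase E)
    (v r : ℕ) (hv : 1 ≤ v) (hr : 1 ≤ r) (n : ℕ → ℕ) (hnr : 1 ≤ n r)
    (hdec : ∀ a, 1 ≤ a → a < r → n (a + 1) + v ≤ n a)
    (J : (a : ℕ) → Ideal (Polynomial (MvPowerSeries (Fin d) K) ⧸
      Ideal.span {(X : Polynomial (MvPowerSeries (Fin d) K)) ^ n a}))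
    (hJ1 : J 1 = Ideal.span {g | ∃ c ∉ E,
      g = Ideal.Quotient.mk (Ideal.span {(X : Polynomial (MvPowerSeries (Fin d) K)) ^ n 1})
        ((C (MvPowerSeries.X ⟨0, hd⟩) - X ^ v) ^ c ⟨0, hd⟩ *
          C (∏ i ∈ Finset.univ.erase ⟨0, hd⟩, MvPowerSeries.X i ^ c i))})
    (hJrec : ∀ a, 1 ≤ a → a < r →
      J (a + 1) =
        Ideal.map (Ideal.Quotient.mk
            (Ideal.span {(X : Polynomial (MvPowerSeries (Fin d) K)) ^ n (a + 1)}))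
          (Ideal.comap (Ideal.Quotient.mk
              (Ideal.span {(X : Polynomial (MvPowerSeries (Fin d) K)) ^ n a}))
            ((J a).colon (Ideal.span {Ideal.Quotient.mk
              (Ideal.span {(X : Polynomial (MvPowerSeries (Fin d) K)) ^ n a})
              (C (MvPowerSeries.X ⟨0, hd⟩))})))) :
    ∀ k, 1 ≤ k → k ≤ r →
      J k ≤
        Ideal.map ((Ideal.Quotient.mk
            (Ideal.span {(X : Polynomial (MvPowerSeries (Fin d) K)) ^ n k})).comp
          (C : MvPowerSeries (Fin d) K →+* Polynomial (MvPowerSeries (Fin d) K)))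
          (psStairIdeal K (stairSlice hd E (n k / v))) := by
  classical
  intro k hk1 hkr
  open ResidualTraceAux in
  set z : Fin d := ⟨0, hd⟩ with hzdef
  have hv' : 0 < v := hv
  -- E is downward closed
  have hEd : ∀ x y : Fin d → ℕ, x ≤ y → y ∈ E → x ∈ E := by
    intro x y hxy hy
    by_contra hx
    have h2 := hE x hx (y - x)
    have h3 : x + (y - x) = y := by
      funext i
      exact Nat.add_sub_cancel' (hxy i)
    rw [h3] at h2
    exact h2 hy
  -- the chain of bounds
  have hθ : ∀ a, 1 ≤ a → a ≤ k → n k + (k - a) * v ≤ n a := by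
    have key : ∀ m, m ≤ k - 1 → n k + m * v ≤ n (k - m) := by
      intro m
      induction m with
      | zero => intro _; simp
      | succ i ihm =>
          intro hm
          have h2 := ihm (by omega)
          have h3 := hdec (k - (i + 1)) (by omega) (by omega)
          rw [show k - (i + 1) + 1 = k - i by omega] at h3
          have h4 : (i + 1) * v = i * v + v := by ring
          omega
    intro a ha hak
    rcases Nat.eq_or_lt_of_le hak with h | h
    · subst h; simp
    · have := key (k - a) (by omega)
      rw [show k - (k - a) = a by omega] at this
      omega
  -- the invariant
  have hinv : ∀ a, 1 ≤ a → a ≤ k →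
      ∀ g : Polynomial (MvPowerSeries (Fin d) K),
        Ideal.Quotient.mk (Ideal.span {(X : Polynomial (MvPowerSeries (Fin d) K)) ^ n a}) g ∈ J a →
        ∀ (b : Fin d →₀ ℕ) (j : ℕ), ⇑b ∈ E → j + v * b z < n k + (k - a) * v →
          ResidualTraceAux.lam v z b j g = 0 := by
    intro a
    induction a with
    | zero => intro h; exact absurd h (by norm_num)
    | succ a iha =>
      intro _ hak g hg b j hb hbound
      by_cases ha0 : a = 0
      · -- base case `a + 1 = 1`
        subst ha0
        have hθ1 : n k + (k - 1) * v ≤ n 1 := hθ 1 le_rfl hk1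
        have hbound' : j + v * b z < n k + (k - 1) * v := by
          rw [show k - (0 + 1) = k - 1 by norm_num] at hbound
          exact hbound
        have hjn : j < n 1 := by
          have h5 : j ≤ j + v * b z := Nat.le_add_right _ _
          omega
        have hg1 : Ideal.Quotient.mk
            (Ideal.span {(X : Polynomial (MvPowerSeries (Fin d) K)) ^ n 1}) g ∈ J 1 := hg
        have hgen : J 1 ≤ Ideal.map (Ideal.Quotient.mk
            (Ideal.span {(X : Polynomial (MvPowerSeries (Fin d) K)) ^ n 1}))
            (ResidualTraceAux.lamIdeal z E (n 1) hEd hv') := by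
          rw [hJ1, Ideal.span_le]
          rintro gg ⟨c, hc, rfl⟩
          refine Ideal.mem_map_of_mem _ ?_
          rw [ResidualTraceAux.mem_lamIdeal]
          intro b' j' hb' _
          exact ResidualTraceAux.lam_gen z hv' c hc b' hb' j'
        obtain ⟨x, hxmem, hxeq⟩ :=
          (Ideal.mem_map_iff_of_surjective _ Ideal.Quotient.mk_surjective).1 (hgen hg1)
        have hker : x - g ∈ Ideal.span
            {(X : Polynomial (MvPowerSeries (Fin d) K)) ^ n 1} := (Ideal.Quotient.eq).1 hxeq
        obtain ⟨cc, hcc⟩ := Ideal.mem_span_singleton'.1 hker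
        have hgx : g = x - cc * (X : Polynomial (MvPowerSeries (Fin d) K)) ^ n 1 := by
          rw [hcc]; ring
        rw [hgx, ResidualTraceAux.lam_sub]
        rw [(ResidualTraceAux.mem_lamIdeal hEd hv').1 hxmem b j hb hjn]
        rw [mul_comm, ResidualTraceAux.lam_Xpow_mul z hv', if_neg (by omega)]
        ring
      · -- inductive step
        have ha1 : 1 ≤ a := by omega
        have hak' : a ≤ k := by omega
        have har : a < r := by omega
        have hrec := hJrec a ha1 har
        rw [hrec] at hg
        obtain ⟨x, hxmem, hxeq⟩ :=
          (Ideal.mem_map_iff_of_surjective _ Ideal.Quotient.mk_surjective).1 hg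
        rw [Ideal.mem_comap, Submodule.mem_colon] at hxmem
        have hxmem := hxmem _ (Ideal.subset_span rfl)
        rw [smul_eq_mul, ← map_mul,
          mul_comm x (C (MvPowerSeries.X z))] at hxmem
        have H := iha ha1 hak' (C (MvPowerSeries.X z) * x) hxmem
        have hmul : (k - a) * v = (k - (a + 1)) * v + v := by
          rw [show k - a = (k - (a + 1)) + 1 by omega]; ring
        have hup : ResidualTraceAux.lam v z b j x = 0 := by
          refine ResidualTraceAux.lam_up z hv' hEd x (n k + (k - a) * v) H (b z) b j rfl hb ?_
          omega
        have hker : x - g ∈ Ideal.span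
            {(X : Polynomial (MvPowerSeries (Fin d) K)) ^ n (a + 1)} :=
          (Ideal.Quotient.eq).1 hxeq
        obtain ⟨cc, hcc⟩ := Ideal.mem_span_singleton'.1 hker
        have hgx : g = x - cc * (X : Polynomial (MvPowerSeries (Fin d) K)) ^ n (a + 1) := by
          rw [hcc]; ring
        have hθ2 : n k + (k - (a + 1)) * v ≤ n (a + 1) := hθ (a + 1) (by omega) hak
        have hjn : j < n (a + 1) := by
          have h5 : j ≤ j + v * b z := Nat.le_add_right _ _
          omega
        rw [hgx, ResidualTraceAux.lam_sub, hup, mul_comm,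
          ResidualTraceAux.lam_Xpow_mul z hv', if_neg (by omega)]
        ring
  -- conclusion
  intro ξ hξ
  obtain ⟨g, rfl⟩ := Ideal.Quotient.mk_surjective ξ
  have Hinv := hinv k hk1 le_rfl g hξ
  have Hinv' : ∀ (b : Fin d →₀ ℕ) (j : ℕ), ⇑b ∈ E → j + v * b z < n k →
      ResidualTraceAux.lam v z b j g = 0 := by
    intro b j hb hj
    apply Hinv b j hb
    have : n k + (k - k) * v = n k := by simp
    omega
  have hcv : ∀ (jj : ℕ) (b : Fin d →₀ ℕ), ⇑(b + Finsupp.single z (jj / v)) ∈ E →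
      jj + v * b z < n k → MvPowerSeries.coeff b (g.coeff jj) = 0 :=
    fun jj b h1 h2 => ResidualTraceAux.lam_conv z hv' hEd g (n k) Hinv' jj b h1 h2
  -- bound box for the slice
  set B0 : Fin d →₀ ℕ := hfin.toFinset.sup (fun c => Finsupp.equivFunOnFinite.symm c) with hB0
  set bnd : Fin d →₀ ℕ := B0 + Finsupp.equivFunOnFinite.symm (fun _ => 1) with hbndd
  have hbnd : ∀ m : Fin d →₀ ℕ, ⇑m ∈ stairSlice hd E (n k / v) → ∀ i, m i < bnd i := by
    intro m hm i
    obtain ⟨hm0, hmup⟩ := hm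
    have hw : Finsupp.equivFunOnFinite.symm (Function.update ⇑m z (n k / v)) ≤ B0 := by
      rw [hB0]
      exact Finset.le_sup (hfin.mem_toFinset.2 hmup)
    have hwi : (Finsupp.equivFunOnFinite.symm (Function.update (⇑m) z (n k / v))) i ≤ B0 i :=
      hw i
    have hsymm : (Finsupp.equivFunOnFinite.symm (Function.update (⇑m) z (n k / v))) i
        = Function.update (⇑m) z (n k / v) i :=
      rfl
    have hmi : m i ≤ Function.update (⇑m) z (n k / v) i := by
      by_cases hi : i = z
      · subst hi
        rw [Function.update_self, hm0]
        exact Nat.zero_le _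
      · rw [Function.update_of_ne hi]
    have h1 : (Finsupp.equivFunOnFinite.symm (fun _ : Fin d => 1)) i = 1 := rfl
    have hbndi : bnd i = B0 i + 1 := by
      rw [hbndd, Finsupp.add_apply, h1]
    omega
  -- truncation of `g` below degree `n k`
  have hdvd : (X : Polynomial (MvPowerSeries (Fin d) K)) ^ n k ∣
      (g - ∑ jj ∈ Finset.range (n k), C (g.coeff jj) * X ^ jj) := by
    rw [Polynomial.X_pow_dvd_iff]
    intro dd hdd
    rw [Polynomial.coeff_sub, Polynomial.finset_sum_coeff]
    have hterm : ∀ jj ∈ Finset.range (n k),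
        (C (g.coeff jj) * (X : Polynomial (MvPowerSeries (Fin d) K)) ^ jj).coeff dd
          = if jj = dd then g.coeff dd else 0 := by
      intro jj _
      rw [Polynomial.coeff_C_mul, Polynomial.coeff_X_pow]
      by_cases h : dd = jj
      · rw [if_pos h, if_pos h.symm, mul_one, h]
      · rw [if_neg h, if_neg (fun hh => h hh.symm), mul_zero]
    rw [Finset.sum_congr rfl hterm, Finset.sum_ite_eq' (Finset.range (n k)) dd
      (fun _ => g.coeff dd)]
    rw [if_pos (Finset.mem_range.2 hdd)]
    exact sub_self _
  have hmk : Ideal.Quotient.mk (Ideal.span {(X : Polynomial (MvPowerSeries (Fin d) K)) ^ n k}) g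
      = Ideal.Quotient.mk (Ideal.span {(X : Polynomial (MvPowerSeries (Fin d) K)) ^ n k})
        (∑ jj ∈ Finset.range (n k), C (g.coeff jj) * X ^ jj) := by
    rw [Ideal.Quotient.eq]
    exact Ideal.mem_span_singleton.2 hdvd
  rw [hmk, map_sum]
  apply Ideal.sum_mem
  intro jj hjj
  rw [Finset.mem_range] at hjj
  rw [map_mul]
  have hmr : ∀ (I : Ideal (Polynomial (MvPowerSeries (Fin d) K) ⧸
      Ideal.span {(X : Polynomial (MvPowerSeries (Fin d) K)) ^ n k}))
      (a b : Polynomial (MvPowerSeries (Fin d) K) ⧸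
      Ideal.span {(X : Polynomial (MvPowerSeries (Fin d) K)) ^ n k}), a ∈ I → a * b ∈ I :=
    fun I a b h => by
      have e : b * a = a * b := mul_comm b a
      exact e ▸ I.mul_mem_left b h
  apply hmr
  have hco : Ideal.Quotient.mk (Ideal.span {(X : Polynomial (MvPowerSeries (Fin d) K)) ^ n k})
      (C (g.coeff jj)) = ((Ideal.Quotient.mk (Ideal.span
        {(X : Polynomial (MvPowerSeries (Fin d) K)) ^ n k})).comp
        (C : MvPowerSeries (Fin d) K →+* Polynomial (MvPowerSeries (Fin d) K))) (g.coeff jj) := rfl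
  rw [hco]
  apply Ideal.mem_map_of_mem
  apply ResidualTraceAux.mem_psStairIdeal_of_coeff (stairSlice hd E (n k / v)) bnd hbnd
  intro m hm
  obtain ⟨hm0, hmup⟩ := hm
  rw [← hzdef] at hm0 hmup
  apply hcv jj m
  · apply hEd _ _ ?_ hmup
    intro i
    rw [Finsupp.add_apply]
    by_cases hi : i = z
    · subst hi
      rw [Finsupp.single_eq_same, Function.update_self, hm0, Nat.zero_add]
      exact Nat.div_le_div_right (le_of_lt hjj)
    · rw [Finsupp.single_eq_of_ne' (fun hh => hi hh.symm), Function.update_of_ne hi, Nat.add_zero]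
  · rw [hm0, Nat.mul_zero, Nat.add_zero]
    exact hjj
end

section
/- Let K be a field, m ≥ 0 an integer, and E ⊆ ℕ² a quasi-regular staircase, i.e. a staircase with R_m ⊆ E ⊆ R_{m+1} where R_m = {(a,b) ∈ ℕ² : a+b < m}. Then for every integer d ≥ 0, the K-dimension of the space of polynomials f ∈ K[x,y] of total degree ≤ d lying in the monomial ideal I^E equals max(0, (d+1)(d+2)/2 − #E). Equivalently, the monomial subscheme of ℙ² with staircase E (supported at one point) has Hilbert function H(d) = min((d+1)(d+2)/2, #E) for all d. -/
section Aux

lemma aux_sum_count (d : ℕ) :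
    2 * ((Finset.range (d+1)).biUnion Finset.HasAntidiagonal.antidiagonal).card = (d+1)*(d+2) := by
  rw [Finset.card_biUnion]
  · have h1 : ∑ k ∈ Finset.range (d+1), (Finset.HasAntidiagonal.antidiagonal k).card
        = ∑ k ∈ Finset.range (d+1), (k+1) := by
      simp [Finset.Nat.card_antidiagonal]
    have h2 : ∑ k ∈ Finset.range (d+2), k = (∑ k ∈ Finset.range (d+1), (k+1)) + 0 :=
      Finset.sum_range_succ' id (d+1)
    have h3 : (∑ k ∈ Finset.range (d+2), k) * 2 = (d+1)*(d+2) := by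
      rw [Finset.sum_range_id_mul_two]; exact Nat.mul_comm _ _
    omega
  · intro x _ y _ hxy
    simp only [Finset.disjoint_left, Finset.HasAntidiagonal.mem_antidiagonal]
    intro p h1 h2
    exact hxy (h1 ▸ h2.symm ▸ rfl)

lemma aux_mem_biUnion (d : ℕ) (p : ℕ × ℕ) :
    p ∈ (Finset.range (d+1)).biUnion Finset.HasAntidiagonal.antidiagonal ↔ p.1 + p.2 ≤ d := by
  simp only [Finset.mem_biUnion, Finset.mem_range, Finset.HasAntidiagonal.mem_antidiagonal]
  constructor
  · rintro ⟨k, hk, h⟩; omega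
  · intro h; exact ⟨p.1 + p.2, by omega, rfl⟩

lemma aux_setA (d : ℕ) :
    {p : ℕ × ℕ | p.1 + p.2 ≤ d} = ↑((Finset.range (d+1)).biUnion Finset.HasAntidiagonal.antidiagonal) := by
  ext p; simp only [Set.mem_setOf_eq, Finset.mem_coe, aux_mem_biUnion]

lemma aux_finiteA (d : ℕ) : {p : ℕ × ℕ | p.1 + p.2 ≤ d}.Finite := by
  rw [aux_setA]; exact Finset.finite_toSet _

lemma aux_cardA (d : ℕ) : 2 * Nat.card {p : ℕ × ℕ | p.1 + p.2 ≤ d} = (d+1)*(d+2) := by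
  rw [aux_setA, Nat.card_coe_set_eq, Set.ncard_coe_finset]
  exact aux_sum_count d

lemma card_transfer2 (Q : Set (Fin 2 → ℕ)) :
    Nat.card {p : ℕ × ℕ | ![p.1, p.2] ∈ Q} = Nat.card Q := by
  refine Nat.card_congr ((piFinTwoEquiv fun _ => ℕ).symm.subtypeEquiv fun p => ?_)
  simp only [piFinTwoEquiv, Equiv.coe_fn_symm_mk, Set.mem_setOf_eq]
  have he : (Fin.cons p.1 (Fin.cons p.2 finZeroElim) : Fin 2 → ℕ) = ![p.1, p.2] := by
    ext i; fin_cases i <;> rfl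
  rw [he]

lemma funset_eq_image (d : ℕ) :
    {f : Fin 2 → ℕ | f 0 + f 1 ≤ d}
      = (fun p : ℕ × ℕ => ![p.1, p.2]) '' {p : ℕ × ℕ | p.1 + p.2 ≤ d} := by
  ext f
  constructor
  · intro hf
    refine ⟨(f 0, f 1), hf, ?_⟩
    ext i; fin_cases i <;> simp
  · rintro ⟨p, hp, rfl⟩
    simpa using hp

lemma funset_finite (d : ℕ) : {f : Fin 2 → ℕ | f 0 + f 1 ≤ d}.Finite := by
  rw [funset_eq_image]
  exact (aux_finiteA d).image _

lemma funset_card (d : ℕ) :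
    2 * Nat.card {f : Fin 2 → ℕ | f 0 + f 1 ≤ d} = (d+1)*(d+2) := by
  have h := card_transfer2 {f : Fin 2 → ℕ | f 0 + f 1 ≤ d}
  have h2 : {p : ℕ × ℕ | ![p.1, p.2] ∈ {f : Fin 2 → ℕ | f 0 + f 1 ≤ d}}
      = {p : ℕ × ℕ | p.1 + p.2 ≤ d} := by
    ext p; simp
  rw [h2] at h
  rw [← h]
  exact aux_cardA d

end Aux

section Aux2

lemma stairIdeal_eq' (K : Type*) [Field K] {d : ℕ} (E : Set (Fin d → ℕ)) :
    stairIdeal K E =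
      Ideal.span ((fun s => MvPolynomial.monomial s (1 : K)) ''
        {s : Fin d →₀ ℕ | ⇑s ∉ E}) := by
  unfold stairIdeal
  congr 1
  ext g
  constructor
  · rintro ⟨c, hc, rfl⟩
    exact ⟨Finsupp.equivFunOnFinite.symm c, by simpa using hc, rfl⟩
  · rintro ⟨s, hs, rfl⟩
    exact ⟨⇑s, hs, by simp⟩

lemma mem_stairIdeal_iff {K : Type*} [Field K] {d : ℕ} {E : Set (Fin d → ℕ)}
    (hE : IsStaircase E) (p : MvPolynomial (Fin d) K) :
    p ∈ stairIdeal K E ↔ ∀ xi ∈ p.support, ⇑xi ∉ E := by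
  rw [stairIdeal_eq', MvPolynomial.mem_ideal_span_monomial_image]
  refine forall₂_congr fun xi _ => ⟨?_, fun h => ⟨xi, h, le_rfl⟩⟩
  rintro ⟨si, hsi, hle⟩
  obtain ⟨t, rfl⟩ := le_iff_exists_add.mp hle
  simpa using hE _ hsi ⇑t

lemma inf_eq_restrictSupport {K : Type*} [Field K] {E : Set (Fin 2 → ℕ)}
    (hE : IsStaircase E) (d : ℕ) :
    MvPolynomial.restrictTotalDegree (Fin 2) K d ⊓ (stairIdeal K E).restrictScalars K
      = MvPolynomial.restrictSupport K
          {s : Fin 2 →₀ ℕ | (s.sum fun _ e => e) ≤ d ∧ ⇑s ∉ E} := by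
  ext p
  rw [Submodule.mem_inf, Submodule.restrictScalars_mem, mem_stairIdeal_iff hE,
    MvPolynomial.restrictTotalDegree, MvPolynomial.restrictSupport,
    MvPolynomial.restrictSupport, AddMonoidAlgebra.mem_supported, AddMonoidAlgebra.mem_supported]
  constructor
  · rintro ⟨h1, h2⟩ xi hxi
    exact ⟨h1 hxi, h2 xi hxi⟩
  · intro h
    exact ⟨fun xi hxi => (h hxi).1, fun xi hxi => (h hxi).2⟩

lemma finrank_restrictSupport {K : Type*} [Field K] (T : Set (Fin 2 →₀ ℕ)) (hT : T.Finite) :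
    Module.finrank K (MvPolynomial.restrictSupport K T) = Nat.card T := by
  haveI := hT.fintype
  rw [Module.finrank_eq_card_basis (MvPolynomial.basisRestrictSupport K T),
    Nat.card_eq_fintype_card]

lemma finsupp_sum_eq (s : Fin 2 →₀ ℕ) : (s.sum fun _ e => e) = s 0 + s 1 := by
  rw [Finsupp.sum_fintype _ _ (fun _ => rfl), Fin.sum_univ_two]

lemma card_transfer (d : ℕ) (P : (Fin 2 → ℕ) → Prop) :
    Nat.card {s : Fin 2 →₀ ℕ | (s.sum fun _ e => e) ≤ d ∧ P ⇑s}
      = Nat.card {f : Fin 2 → ℕ | f 0 + f 1 ≤ d ∧ P f} := by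
  refine Nat.card_congr (Finsupp.equivFunOnFinite.subtypeEquiv fun s => ?_)
  simp [finsupp_sum_eq s, Finsupp.equivFunOnFinite]

lemma finsupp_set_finite (d : ℕ) (P : (Fin 2 → ℕ) → Prop) :
    {s : Fin 2 →₀ ℕ | (s.sum fun _ e => e) ≤ d ∧ P ⇑s}.Finite := by
  have hsub : {s : Fin 2 →₀ ℕ | (s.sum fun _ e => e) ≤ d ∧ P ⇑s}
      ⊆ (Finsupp.equivFunOnFinite : (Fin 2 →₀ ℕ) ≃ (Fin 2 → ℕ)) ⁻¹'
          {f : Fin 2 → ℕ | f 0 + f 1 ≤ d} := by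
    rintro s ⟨h1, _⟩
    rw [finsupp_sum_eq] at h1
    exact h1
  exact ((funset_finite d).preimage
    ((Finsupp.equivFunOnFinite).injective.injOn)).subset hsub

lemma card_transferE (d : ℕ) (E : Set (Fin 2 → ℕ)) :
    Nat.card {s : Fin 2 →₀ ℕ | (s.sum fun _ e => e) ≤ d ∧ ⇑s ∉ E}
      = Nat.card {f : Fin 2 → ℕ | f 0 + f 1 ≤ d ∧ f ∉ E} :=
  card_transfer d (fun f => f ∉ E)

end Aux2

/-- **Hilbert function of a quasi-regular monomial subscheme of the plane**
(Evain, used in the proposition on collisions).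

Let `E ⊆ ℕ²` be a quasi-regular staircase, i.e. `R_m ⊆ E ⊆ R_{m+1}` where
`R_m = {(a,b) : a+b < m}`.  Then for every `d ≥ 0`, the dimension of the space of
polynomials of total degree `≤ d` lying in the monomial ideal `I^E` equals
`max(0, (d+1)(d+2)/2 − #E)`; equivalently the monomial subscheme of `ℙ²` with
staircase `E` has Hilbert function `min((d+1)(d+2)/2, #E)`. -/
theorem quasiRegular_hilbert_function {K : Type*} [Field K] (m : ℕ)
    (E : Set (Fin 2 → ℕ)) (hE : IsStaircase E)
    (hlow : {e : Fin 2 → ℕ | e 0 + e 1 < m} ⊆ E)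
    (hhigh : E ⊆ {e : Fin 2 → ℕ | e 0 + e 1 < m + 1}) :
    ∀ d : ℕ,
      (Module.finrank K
          ↥(MvPolynomial.restrictTotalDegree (Fin 2) K d ⊓
            (stairIdeal K E).restrictScalars K) : ℤ) =
        max 0 (((d : ℤ) + 1) * ((d : ℤ) + 2) / 2 - Nat.card E) := by
  intro d
  have hEfin : E.Finite := (funset_finite m).subset (fun f hf => by
    have h := hhigh hf; simp only [Set.mem_setOf_eq] at h ⊢; omega)
  rw [inf_eq_restrictSupport hE d,
    finrank_restrictSupport _ (finsupp_set_finite d (fun f => f ∉ E)),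
    card_transferE d E]
  rcases le_or_gt m d with hmd | hdm
  · -- case m ≤ d : the set is the full simplex minus E
    have hEsub : E ⊆ {f : Fin 2 → ℕ | f 0 + f 1 ≤ d} := fun f hf => by
      have h := hhigh hf; simp only [Set.mem_setOf_eq] at h ⊢; omega
    have hset : {f : Fin 2 → ℕ | f 0 + f 1 ≤ d ∧ f ∉ E}
        = {f : Fin 2 → ℕ | f 0 + f 1 ≤ d} \ E := by
      ext f; simp only [Set.mem_setOf_eq, Set.mem_diff]
    have hdiff : ({f : Fin 2 → ℕ | f 0 + f 1 ≤ d} \ E).ncard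
        = {f : Fin 2 → ℕ | f 0 + f 1 ≤ d}.ncard - E.ncard :=
      Set.ncard_diff hEsub hEfin
    have hle : E.ncard ≤ {f : Fin 2 → ℕ | f 0 + f 1 ≤ d}.ncard :=
      Set.ncard_le_ncard hEsub (funset_finite d)
    have hcast : (2 : ℤ) * ({f : Fin 2 → ℕ | f 0 + f 1 ≤ d}.ncard : ℤ)
        = ((d : ℤ) + 1) * ((d : ℤ) + 2) := by
      rw [← Nat.card_coe_set_eq]; exact_mod_cast funset_card d
    rw [hset, Nat.card_coe_set_eq, hdiff, Nat.card_coe_set_eq E,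
      Nat.cast_sub hle]
    clear hset hdiff
    generalize hA : {f : Fin 2 → ℕ | f 0 + f 1 ≤ d}.ncard = a at hcast hle ⊢
    generalize hB : E.ncard = b at hle ⊢
    clear hA hB
    rw [max_eq_right (by omega)]
    omega
  · -- case d < m : the set is empty
    have hset : {f : Fin 2 → ℕ | f 0 + f 1 ≤ d ∧ f ∉ E} = (∅ : Set (Fin 2 → ℕ)) := by
      ext f
      simp only [Set.mem_setOf_eq, Set.mem_empty_iff_false, iff_false, not_and, not_not]
      intro hf
      exact hlow (by simp only [Set.mem_setOf_eq]; omega)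
    have hle : {f : Fin 2 → ℕ | f 0 + f 1 ≤ d}.ncard ≤ E.ncard := by
      refine Set.ncard_le_ncard (fun f hf => ?_) hEfin
      simp only [Set.mem_setOf_eq] at hf
      exact hlow (by simp only [Set.mem_setOf_eq]; omega)
    have hcast : (2 : ℤ) * ({f : Fin 2 → ℕ | f 0 + f 1 ≤ d}.ncard : ℤ)
        = ((d : ℤ) + 1) * ((d : ℤ) + 2) := by
      rw [← Nat.card_coe_set_eq]; exact_mod_cast funset_card d
    rw [hset, Nat.card_coe_set_eq, Set.ncard_empty, Nat.card_coe_set_eq E]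
    clear hset
    generalize hA : {f : Fin 2 → ℕ | f 0 + f 1 ≤ d}.ncard = a at hcast hle
    generalize hB : E.ncard = b at hle ⊢
    clear hA hB
    rw [max_eq_left (by omega)]
    simp
end
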